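/- arXiv:1512.01281 — 9 statements merged into one kernel-verified Lean document; each statement's English description precedes it below -/
import Mathlib

section
/- Let G be a connected finite simple graph with δ̂-thin triangles (δ̂ ≥ 0). Then for all vertices a, b, c, d of G, d(a,b) + d(c,d) ≤ max(d(a,c) + d(b,d), d(a,d) + d(b,c)) + 4δ̂; that is, the graph distance satisfies the four-point condition with constant 2δ̂. -/
/-!
Fix a base point `w` and geodesics from `w` to `x`, `y`, `z`. If an integer `k` is at most
`(x.z)_w` and `(y.z)_w`, thinness makes the `k`-th vertices of the three geodesics `δ`-close,
and the detour through them gives `(x.y)_w ≥ k - δ`. With `k = ⌊(x.z)_w⌋` this is the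
four-point inequality with constant `δ`, up to an extra `1/2` when the triangle `wxz` has odd
perimeter. The inequality for `a b c d` can be obtained this way from the triangle `dac` and
from `adb`; if both perimeters are odd, the two pair sums being compared have the same parity,
so the extra `1` is absorbed by integrality when `δ < 1/2` and by the slack `2δ ≥ 1` otherwise.
-/

noncomputable def gp {V : Type*} (G : SimpleGraph V) (r x y : V) : ℝ :=
  ((G.dist x r : ℝ) + (G.dist y r : ℝ) - (G.dist x y : ℝ)) / 2

def ThinTriangles {V : Type*} (G : SimpleGraph V) (δ : ℝ) : Prop :=
  ∀ x y z : V, ∀ p : G.Walk x y, ∀ q : G.Walk x z,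
    p.length = G.dist x y → q.length = G.dist x z →
    ∀ k : ℕ, (k : ℝ) ≤ gp G x y z →
      (G.dist (p.getVert k) (q.getVert k) : ℝ) ≤ δ

namespace SimpleGraph

variable {V : Type*} {G : SimpleGraph V}

lemma dist_getVert_le_length_sub {u v : V} (p : G.Walk u v) (k : ℕ) :
    G.dist (p.getVert k) v ≤ p.length - k :=
  p.drop_length k ▸ dist_le (p.drop k)

lemma le_gp_of_dist_add_two_mul_le {w x z : V} {k : ℕ}
    (h : G.dist x z + 2 * k ≤ G.dist w x + G.dist w z) : (k : ℝ) ≤ gp G w x z := by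
  have h' : (G.dist x z : ℝ) + 2 * k ≤ G.dist w x + G.dist w z := by exact_mod_cast h
  rw [gp, dist_comm (u := x), dist_comm (u := z)]
  linarith

lemma dist_add_two_mul_le_of_thinTriangles (hconn : G.Connected) {δ : ℝ}
    (hthin : ThinTriangles G δ) {w x y z : V} {k : ℕ}
    (hx : G.dist x z + 2 * k ≤ G.dist w x + G.dist w z)
    (hy : G.dist y z + 2 * k ≤ G.dist w y + G.dist w z) :
    (G.dist x y : ℝ) + 2 * k ≤ G.dist w x + G.dist w y + 2 * δ := by
  obtain ⟨p, hp⟩ := hconn.exists_walk_length_eq_dist w x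
  obtain ⟨q, hq⟩ := hconn.exists_walk_length_eq_dist w y
  obtain ⟨r, hr⟩ := hconn.exists_walk_length_eq_dist w z
  have hpr := hthin w x z p r hp hr k (le_gp_of_dist_add_two_mul_le hx)
  have hrq := hthin w z y r q hr hq k <| le_gp_of_dist_add_two_mul_le <| by
    rwa [dist_comm (u := z), add_comm (G.dist w z)]
  have hxk : G.dist x (p.getVert k) + k ≤ G.dist w x := by
    have := dist_comm (G := G) ▸ dist_getVert_le_length_sub p k
    have : G.dist w z ≤ G.dist w x + G.dist x z := hconn.dist_triangle
    omega
  have hyk : G.dist (q.getVert k) y + k ≤ G.dist w y := by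
    have := dist_getVert_le_length_sub q k
    have : G.dist w z ≤ G.dist w y + G.dist y z := hconn.dist_triangle
    omega
  have hdetour : G.dist x y ≤ G.dist x (p.getVert k) + G.dist (p.getVert k) (r.getVert k) +
      G.dist (r.getVert k) (q.getVert k) + G.dist (q.getVert k) y :=
    calc G.dist x y
      _ ≤ G.dist x (p.getVert k) + G.dist (p.getVert k) y := hconn.dist_triangle
      _ ≤ G.dist x (p.getVert k) + (G.dist (p.getVert k) (r.getVert k) +
          (G.dist (r.getVert k) (q.getVert k) + G.dist (q.getVert k) y)) := by
        grw [hconn.dist_triangle (u := p.getVert k) (v := r.getVert k),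
          hconn.dist_triangle (u := r.getVert k) (v := q.getVert k)]
      _ = _ := by ring
  have hxk' : (G.dist x (p.getVert k) : ℝ) + k ≤ G.dist w x := by exact_mod_cast hxk
  have hyk' : (G.dist (q.getVert k) y : ℝ) + k ≤ G.dist w y := by exact_mod_cast hyk
  have hdetour' : (G.dist x y : ℝ) ≤ G.dist x (p.getVert k) +
      G.dist (p.getVert k) (r.getVert k) + G.dist (r.getVert k) (q.getVert k) +
      G.dist (q.getVert k) y := by exact_mod_cast hdetour
  linarith

lemma dist_add_dist_le_of_thinTriangles (hconn : G.Connected) {δ : ℝ}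
    (hthin : ThinTriangles G δ) {w x y z : V}
    (hle : G.dist y z + G.dist w x ≤ G.dist x z + G.dist w y) :
    (G.dist x y : ℝ) + G.dist w z ≤ G.dist x z + G.dist w y + 2 * δ +
      ((G.dist w x + G.dist w z + G.dist x z) % 2 : ℕ) := by
  set k := (G.dist w x + G.dist w z - G.dist x z) / 2
  have htri : G.dist x z ≤ G.dist w x + G.dist w z := by
    rw [dist_comm (u := w)]
    exact hconn.dist_triangle
  have hk : G.dist x z + 2 * k + (G.dist w x + G.dist w z + G.dist x z) % 2 =
      G.dist w x + G.dist w z := by omega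
  have hk' : (G.dist x z : ℝ) + 2 * k + ((G.dist w x + G.dist w z + G.dist x z) % 2 : ℕ) =
      G.dist w x + G.dist w z := by exact_mod_cast hk
  have := dist_add_two_mul_le_of_thinTriangles hconn hthin (w := w) (x := x) (y := y) (z := z)
    (k := k) (by omega) (by omega)
  linarith

lemma four_point_of_thinTriangles (hconn : G.Connected) {δ : ℝ} (hδ : 0 ≤ δ)
    (hthin : ThinTriangles G δ) {a b c d : V}
    (hle : G.dist a d + G.dist b c ≤ G.dist a c + G.dist b d) :
    (G.dist a b : ℝ) + G.dist c d ≤ G.dist a c + G.dist b d + 4 * δ := by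
  have hd := dist_add_dist_le_of_thinTriangles hconn hthin (w := d) (x := a) (y := b) (z := c)
    (by rw [dist_comm (u := d), dist_comm (u := d)]; omega)
  have ha := dist_add_dist_le_of_thinTriangles hconn hthin (w := a) (x := d) (y := c) (z := b)
    (by rw [dist_comm (u := c), dist_comm (u := d)]; omega)
  simp only [dist_comm (u := d)] at hd ha
  set e₁ := (G.dist a d + G.dist c d + G.dist a c) % 2
  set e₂ := (G.dist a d + G.dist a b + G.dist b d) % 2
  rcases le_or_gt (1 / 2) δ with hδ_half | hδ_half
  · have he₁ : (e₁ : ℝ) ≤ 1 := by exact_mod_cast Nat.le_of_lt_succ (Nat.mod_lt _ two_pos)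
    linarith
  · have h₁ : G.dist a b + G.dist c d < G.dist a c + G.dist b d + e₁ + 1 := by
      have : (G.dist a b : ℝ) + G.dist c d < G.dist a c + G.dist b d + e₁ + 1 := by linarith
      exact_mod_cast this
    have h₂ : G.dist a b + G.dist c d < G.dist a c + G.dist b d + e₂ + 1 := by
      have : (G.dist a b : ℝ) + G.dist c d < G.dist a c + G.dist b d + e₂ + 1 := by linarith
      exact_mod_cast this
    -- `e₁ + e₂` has the parity of the difference of the two pair sums
    have : G.dist a b + G.dist c d ≤ G.dist a c + G.dist b d := by omega
    have : (G.dist a b : ℝ) + G.dist c d ≤ G.dist a c + G.dist b d := by exact_mod_cast this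
    linarith

end SimpleGraph

theorem stmt1_general {V : Type*} (G : SimpleGraph V) (hconn : G.Connected)
    (δ : ℝ) (hδ : 0 ≤ δ) (hthin : ThinTriangles G δ) (a b c d : V) :
    (G.dist a b : ℝ) + (G.dist c d : ℝ) ≤
      max ((G.dist a c : ℝ) + (G.dist b d : ℝ)) ((G.dist a d : ℝ) + (G.dist b c : ℝ))
        + 4 * δ := by
  rcases le_total (G.dist a d + G.dist b c) (G.dist a c + G.dist b d) with h | h
  · grw [← le_max_left]
    exact SimpleGraph.four_point_of_thinTriangles hconn hδ hthin h
  · grw [← le_max_right]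
    have := SimpleGraph.four_point_of_thinTriangles hconn hδ hthin (a := a) (b := b) (c := d)
      (d := c) h
    rwa [SimpleGraph.dist_comm (u := d) (v := c)] at this

/-- A connected finite graph with `δ̂`-thin triangles satisfies the four-point condition
with constant `2δ̂`. -/
theorem stmt1 {V : Type*} [Fintype V] (G : SimpleGraph V) (hconn : G.Connected)
    (δ : ℝ) (hδ : 0 ≤ δ) (hthin : ThinTriangles G δ) (a b c d : V) :
    (G.dist a b : ℝ) + (G.dist c d : ℝ) ≤
      max ((G.dist a c : ℝ) + (G.dist b d : ℝ)) ((G.dist a d : ℝ) + (G.dist b c : ℝ))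
        + 4 * δ :=
  stmt1_general G hconn δ hδ hthin a b c d
end

section
/- Let G be a connected finite simple graph and δ ≥ 0 such that for every base point w and all vertices x, y, z one has (x.z)_w ≥ min((x.y)_w, (y.z)_w) − δ. Then G has 4δ-thin triangles: for any vertices x, y, z, any shortest walks p from x to y and q from x to z, and any integer k with 0 ≤ k ≤ (y.z)_x, the vertex at distance k from x along p and the vertex at distance k from x along q are at distance at most 4δ from each other. -/
private lemma dist_getVert_le' {V : Type*} (G : SimpleGraph V) {x y : V}
    (p : G.Walk x y) (hconn : G.Connected) (k : ℕ) :
    G.dist x (p.getVert k) ≤ k := by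
  induction k with
  | zero => simp
  | succ n ih =>
    rcases lt_or_ge n p.length with hn | hn
    · have hadj := p.adj_getVert_succ hn
      calc G.dist x (p.getVert (n+1)) ≤
            G.dist x (p.getVert n) + G.dist (p.getVert n) (p.getVert (n+1)) :=
              hconn.dist_triangle
        _ ≤ n + 1 := by
            have : G.dist (p.getVert n) (p.getVert (n+1)) = 1 :=
              (SimpleGraph.dist_eq_one_iff_adj).2 hadj
            omega
    · rw [p.getVert_of_length_le (by omega)]
      rw [p.getVert_of_length_le hn] at ih
      omega

private lemma dist_getVert_eq {V : Type*} (G : SimpleGraph V) {x y : V}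
    (p : G.Walk x y) (hp : p.length = G.dist x y) (hconn : G.Connected)
    {k : ℕ} (hk : k ≤ p.length) :
    G.dist x (p.getVert k) = k ∧ G.dist (p.getVert k) y = p.length - k := by
  have h1 : G.dist x (p.getVert k) ≤ k := dist_getVert_le' G p hconn k
  have h2 : G.dist (p.getVert k) y ≤ p.length - k := by
    have := dist_getVert_le' G p.reverse hconn (p.length - k)
    rw [p.getVert_reverse] at this
    have hkk : p.length - (p.length - k) = k := by omega
    rw [hkk] at this
    rwa [SimpleGraph.dist_comm]
  have h3 : G.dist x y ≤ G.dist x (p.getVert k) + G.dist (p.getVert k) y :=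
    hconn.dist_triangle
  omega

/-- A connected finite graph that is `δ`-hyperbolic at every base point has
`4δ`-thin triangles. -/
theorem stmt2 {V : Type*} [Fintype V] (G : SimpleGraph V) (hconn : G.Connected)
    (δ : ℝ) (hδ : 0 ≤ δ)
    (h : ∀ w x y z : V, gp G w x z ≥ min (gp G w x y) (gp G w y z) - δ) :
    ThinTriangles G (4 * δ) := by
  intro x y z p q hp hq k hk
  set u := p.getVert k with hu
  set v := q.getVert k with hv
  -- k ≤ p.length and k ≤ q.length
  have hgyz : gp G x y z ≤ G.dist x y := by
    have := hconn.dist_triangle (u := z) (v := y) (w := x)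
    simp only [gp]
    rw [SimpleGraph.dist_comm (u := y) (v := x), SimpleGraph.dist_comm (u := z) (v := x)]
    have : (G.dist z x : ℝ) ≤ G.dist z y + G.dist y x := by exact_mod_cast this
    rw [SimpleGraph.dist_comm (u := z) (v := y), SimpleGraph.dist_comm (u := z) (v := x),
      SimpleGraph.dist_comm (u := y) (v := x)] at this
    linarith
  have hgyz' : gp G x y z ≤ G.dist x z := by
    have := hconn.dist_triangle (u := y) (v := z) (w := x)
    simp only [gp]
    rw [SimpleGraph.dist_comm (u := y) (v := x), SimpleGraph.dist_comm (u := z) (v := x)]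
    have : (G.dist y x : ℝ) ≤ G.dist y z + G.dist z x := by exact_mod_cast this
    rw [SimpleGraph.dist_comm (u := y) (v := x), SimpleGraph.dist_comm (u := z) (v := x)] at this
    linarith
  have hkp : k ≤ p.length := by
    have : (k : ℝ) ≤ G.dist x y := le_trans hk hgyz
    rw [hp]; exact_mod_cast this
  have hkq : k ≤ q.length := by
    have : (k : ℝ) ≤ G.dist x z := le_trans hk hgyz'
    rw [hq]; exact_mod_cast this
  obtain ⟨hxu, huy⟩ := dist_getVert_eq G p hp hconn hkp
  obtain ⟨hxv, hvz⟩ := dist_getVert_eq G q hq hconn hkq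
  -- real versions
  have rxu : (G.dist x u : ℝ) = k := by exact_mod_cast hxu
  have rxv : (G.dist x v : ℝ) = k := by exact_mod_cast hxv
  have ruy : (G.dist u y : ℝ) = (G.dist x y : ℝ) - k := by
    rw [huy, ← hp, Nat.cast_sub hkp]
  have rvz : (G.dist v z : ℝ) = (G.dist x z : ℝ) - k := by
    rw [hvz, ← hq, Nat.cast_sub hkq]
  have e1 : gp G x u y = k := by
    simp only [gp]
    rw [SimpleGraph.dist_comm (u := u) (v := x), SimpleGraph.dist_comm (u := y) (v := x), rxu, ruy]
    ring
  have e2 : gp G x z v = k := by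
    simp only [gp]
    rw [SimpleGraph.dist_comm (u := v) (v := x), SimpleGraph.dist_comm (u := z) (v := x),
      SimpleGraph.dist_comm (u := z) (v := v), rxv, rvz]
    ring
  have h1 := h x u y z
  have hmin1 : (k : ℝ) ≤ min (gp G x u y) (gp G x y z) :=
    le_min (le_of_eq e1.symm) hk
  have huz : gp G x u z ≥ (k : ℝ) - δ := by linarith
  have h3 := h x u z v
  have hmin3 : (k : ℝ) - δ ≤ min (gp G x u z) (gp G x z v) :=
    le_min huz (by rw [e2]; linarith)
  have huv : gp G x u v ≥ (k : ℝ) - 2 * δ := by linarith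
  have egp : gp G x u v = ((k : ℝ) + k - (G.dist u v : ℝ)) / 2 := by
    simp only [gp]
    rw [SimpleGraph.dist_comm (u := u) (v := x), SimpleGraph.dist_comm (u := v) (v := x), rxu, rxv]
  linarith
end

section
/- Let G be a connected finite simple graph with base point r, and let x ≠ y be vertices. Then there exists a path x = w₁, w₂, …, w_k = y in G (consecutive vertices adjacent, no repeated vertices) with min_{1 ≤ i ≤ k−1} (w_i.w_{i+1})_r = f(x,y). Moreover, for any such maximizing path, setting α = min_{1 ≤ i ≤ k} d(w_i, r), one has f(x,y) = α − 1/2 if there is an index i with d(w_i, r) = d(w_{i+1}, r) = α, and f(x,y) = α otherwise. -/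
/-- `m` is the value `f(x,y)`: the maximum, over all finite sequences
`x = w₀, …, w_{k-1} = y` of vertices (`k ≥ 2`, repetitions allowed), of
`min_i (w_i.w_{i+1})_r`. -/
def IsFG {V : Type*} (G : SimpleGraph V) (r x y : V) (m : ℝ) : Prop :=
  (∃ k : ℕ, 2 ≤ k ∧ ∃ w : ℕ → V, w 0 = x ∧ w (k - 1) = y ∧
      (∀ i < k - 1, m ≤ gp G r (w i) (w (i + 1))) ∧
      (∃ i < k - 1, gp G r (w i) (w (i + 1)) = m)) ∧
  (∀ k : ℕ, 2 ≤ k → ∀ w : ℕ → V, w 0 = x → w (k - 1) = y →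
      ∃ i < k - 1, gp G r (w i) (w (i + 1)) ≤ m)

section Helpers

open SimpleGraph

variable {V : Type*}

lemma gp_comm (G : SimpleGraph V) (r a b : V) : gp G r a b = gp G r b a := by
  unfold gp; rw [SimpleGraph.dist_comm (u := a) (v := b)]; ring

lemma gp_adj (G : SimpleGraph V) (r : V) {a b : V} (h : G.Adj a b) :
    gp G r a b = ((G.dist a r : ℝ) + (G.dist b r : ℝ) - 1) / 2 := by
  unfold gp
  rw [SimpleGraph.dist_eq_one_iff_adj.2 h]
  norm_num

lemma getVert_edge_mem {G : SimpleGraph V} {u v : V} (p : G.Walk u v) :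
    ∀ i < p.length, s(p.getVert i, p.getVert (i+1)) ∈ p.edges := by
  induction p with
  | nil => simp
  | cons h q ih =>
    intro i hi
    cases i with
    | zero =>
      simp [Walk.getVert_zero, Walk.getVert_cons_succ, Walk.edges_cons]
    | succ n =>
      simp only [Walk.getVert_cons_succ, Walk.edges_cons]
      right
      exact ih n (by simpa using hi)

lemma edge_mem_exists_index {G : SimpleGraph V} {u v : V} (p : G.Walk u v) :
    ∀ e ∈ p.edges, ∃ i < p.length, e = s(p.getVert i, p.getVert (i+1)) := by
  induction p with
  | nil => simp
  | cons h q ih =>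
    intro e he
    rw [Walk.edges_cons] at he
    rcases List.mem_cons.1 he with he | he
    · exact ⟨0, by simp, by simp [he, Walk.getVert_zero, Walk.getVert_cons_succ]⟩
    · obtain ⟨i, hi, hei⟩ := ih e he
      exact ⟨i + 1, by simpa using hi, by simpa [Walk.getVert_cons_succ] using hei⟩

lemma dist_start_getVert_le {G : SimpleGraph V} (hconn : G.Connected) {u v : V}
    (p : G.Walk u v) : ∀ i, G.dist u (p.getVert i) ≤ i := by
  induction p with
  | nil => intro i; simp [Walk.getVert, SimpleGraph.dist_self]
  | cons h q ih =>
    intro i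
    cases i with
    | zero => simp [Walk.getVert_zero, SimpleGraph.dist_self]
    | succ n =>
      rw [Walk.getVert_cons_succ]
      calc G.dist _ _ ≤ G.dist _ _ + G.dist _ (q.getVert n) := hconn.dist_triangle
        _ ≤ 1 + n := by
            gcongr
            · exact G.dist_le (Walk.cons h Walk.nil)
            · exact ih n
        _ = n + 1 := by ring

lemma dist_getVert_end_le {G : SimpleGraph V} {u v : V}
    (p : G.Walk u v) : ∀ i, G.dist (p.getVert i) v ≤ p.length - i := by
  induction p with
  | nil => intro i; simp [Walk.getVert, SimpleGraph.dist_self]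
  | cons h q ih =>
    intro i
    cases i with
    | zero =>
      rw [Walk.getVert_zero]
      simpa using G.dist_le (Walk.cons h q)
    | succ n =>
      rw [Walk.getVert_cons_succ, Walk.length_cons, Nat.succ_sub_succ]
      exact ih n

lemma geodesic_gp (G : SimpleGraph V) (hconn : G.Connected) (r : V) {u v : V}
    (p : G.Walk u v) (hp : p.length = G.dist u v) :
    ∀ i < p.length, gp G r u v ≤ gp G r (p.getVert i) (p.getVert (i+1)) := by
  intro i hi
  have hadj := p.adj_getVert_succ hi
  rw [gp_adj G r hadj]
  unfold gp
  have h1 : G.dist u r ≤ i + G.dist (p.getVert i) r := by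
    calc G.dist u r ≤ G.dist u (p.getVert i) + G.dist (p.getVert i) r := hconn.dist_triangle
      _ ≤ i + G.dist (p.getVert i) r := by
          gcongr; exact dist_start_getVert_le hconn p i
  have h2 : G.dist v r + (i + 1) ≤ p.length + G.dist (p.getVert (i+1)) r := by
    have ht : G.dist v r ≤ (p.length - (i+1)) + G.dist (p.getVert (i+1)) r := by
      calc G.dist v r ≤ G.dist v (p.getVert (i+1)) + G.dist (p.getVert (i+1)) r :=
            hconn.dist_triangle
        _ ≤ (p.length - (i+1)) + G.dist (p.getVert (i+1)) r := by
            gcongr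
            rw [SimpleGraph.dist_comm]
            exact dist_getVert_end_le p (i+1)
    omega
  have hduv : (G.dist u v : ℝ) = (p.length : ℝ) := by exact_mod_cast hp.symm
  have h1' : (G.dist u r : ℝ) ≤ (i : ℝ) + (G.dist (p.getVert i) r : ℝ) := by exact_mod_cast h1
  have h2' : (G.dist v r : ℝ) + ((i : ℝ) + 1) ≤
      (p.length : ℝ) + (G.dist (p.getVert (i+1)) r : ℝ) := by exact_mod_cast h2
  linarith

lemma walk_of_seq (G : SimpleGraph V) (hconn : G.Connected) (r : V) (c : ℝ) :
    ∀ (k : ℕ) (w : ℕ → V), (∀ i < k, c ≤ gp G r (w i) (w (i+1))) →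
    ∃ p : G.Walk (w 0) (w k), ∀ a b : V, s(a,b) ∈ p.edges → c ≤ gp G r a b := by
  intro k
  induction k with
  | zero => exact fun w _ => ⟨Walk.nil, by simp⟩
  | succ n ih =>
    intro w hw
    obtain ⟨p, hp⟩ := ih w (fun i hi => hw i (Nat.lt_succ_of_lt hi))
    obtain ⟨q, hq⟩ := hconn.exists_walk_length_eq_dist (w n) (w (n+1))
    refine ⟨p.append q, ?_⟩
    intro a b hab
    rw [Walk.edges_append, List.mem_append] at hab
    rcases hab with hab | hab
    · exact hp a b hab
    · obtain ⟨i, hi, hei⟩ := edge_mem_exists_index q _ hab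
      have hg := geodesic_gp G hconn r q hq i hi
      have hwn := hw n (Nat.lt_succ_self n)
      rcases Sym2.eq_iff.1 hei with ⟨ha, hb⟩ | ⟨ha, hb⟩
      · rw [ha, hb]; exact le_trans hwn hg
      · rw [ha, hb, gp_comm]; exact le_trans hwn hg

lemma getVert_mem_support {G : SimpleGraph V} {u v : V} (p : G.Walk u v) (i : ℕ) :
    p.getVert i ∈ p.support := by
  induction p generalizing i with
  | nil => cases i <;> simp [Walk.getVert]
  | cons h q ih =>
    cases i with
    | zero => simp [Walk.getVert_zero]
    | succ n =>
      rw [Walk.getVert_cons_succ, Walk.support_cons]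
      exact List.mem_cons_of_mem _ (ih n)

lemma path_getVert_injective {G : SimpleGraph V} {u v : V} (p : G.Walk u v) :
    p.IsPath → ∀ i j, i ≤ p.length → j ≤ p.length → p.getVert i = p.getVert j → i = j := by
  induction p with
  | nil => intro _ i j hi hj _; simp only [Walk.length_nil, Nat.le_zero] at hi hj; omega
  | cons h q ih =>
    intro hp i j hi hj heq
    rw [Walk.cons_isPath_iff] at hp
    match i, j with
    | 0, 0 => rfl
    | 0, j+1 =>
      exfalso; apply hp.2
      rw [Walk.getVert_zero, Walk.getVert_cons_succ] at heq
      exact heq ▸ getVert_mem_support q j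
    | i+1, 0 =>
      exfalso; apply hp.2
      rw [Walk.getVert_zero, Walk.getVert_cons_succ] at heq
      exact heq ▸ getVert_mem_support q i
    | i+1, j+1 =>
      rw [Walk.getVert_cons_succ, Walk.getVert_cons_succ] at heq
      have := ih hp.1 i j (by simpa using hi) (by simpa using hj) heq
      omega

end Helpers

/-- There is a maximizing sequence for `f(x,y)` that is a path, and for any maximizing
path, with `α = min_i d(w_i, r)`, `f(x,y) = α - 1/2` if two consecutive vertices of the
path are at distance `α` from `r`, and `f(x,y) = α` otherwise. -/
theorem stmt7 {V : Type*} [Fintype V] (G : SimpleGraph V) (hconn : G.Connected)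
    (r x y : V) (hxy : x ≠ y)
    (f : V → V → ℝ) (hf : ∀ a b, IsFG G r a b (f a b)) :
    (∃ k : ℕ, 2 ≤ k ∧ ∃ w : ℕ → V, w 0 = x ∧ w (k - 1) = y ∧
        (∀ i < k - 1, G.Adj (w i) (w (i + 1))) ∧
        (∀ i j, i < k → j < k → w i = w j → i = j) ∧
        (∀ i < k - 1, f x y ≤ gp G r (w i) (w (i + 1))) ∧
        (∃ i < k - 1, gp G r (w i) (w (i + 1)) = f x y)) ∧
    (∀ k : ℕ, 2 ≤ k → ∀ w : ℕ → V, w 0 = x → w (k - 1) = y →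
        (∀ i < k - 1, G.Adj (w i) (w (i + 1))) →
        (∀ i j, i < k → j < k → w i = w j → i = j) →
        (∀ i < k - 1, f x y ≤ gp G r (w i) (w (i + 1))) →
        ∀ α : ℕ, (∀ i < k, α ≤ G.dist (w i) r) → (∃ i < k, G.dist (w i) r = α) →
          ((∃ i < k - 1, G.dist (w i) r = α ∧ G.dist (w (i + 1)) r = α) →
              f x y = (α : ℝ) - 1 / 2) ∧
          ((¬ ∃ i < k - 1, G.dist (w i) r = α ∧ G.dist (w (i + 1)) r = α) →
              f x y = (α : ℝ))) := by
  open SimpleGraph in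
  constructor
  · -- Part 1: existence of a maximizing path
    classical
    obtain ⟨⟨k, hk2, w, hw0, hwk, hge, _⟩, hub⟩ := hf x y
    obtain ⟨p, hp⟩ := walk_of_seq G hconn r (f x y) (k-1) w hge
    set q : G.Walk x y := (p.copy hw0 hwk).bypass with hqdef
    have hqpath : q.IsPath := SimpleGraph.Walk.bypass_isPath _
    have hqe : ∀ a b : V, s(a,b) ∈ q.edges → f x y ≤ gp G r a b := by
      intro a b hab
      apply hp a b
      have := SimpleGraph.Walk.edges_bypass_subset _ hab
      rwa [SimpleGraph.Walk.edges_copy] at this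
    have hlen : q.length ≠ 0 := by
      intro h0
      apply hxy
      have h2 := q.getVert_length
      rw [h0] at h2
      rw [← q.getVert_zero, h2]
    have hqy : q.getVert (q.length + 1 - 1) = y := by
      simp only [Nat.add_sub_cancel]; exact q.getVert_length
    have hge' : ∀ i < q.length + 1 - 1, f x y ≤ gp G r (q.getVert i) (q.getVert (i+1)) := by
      intro i hi
      exact hqe _ _ (getVert_edge_mem q i (by omega))
    refine ⟨q.length + 1, by omega, q.getVert, q.getVert_zero, hqy, ?_, ?_, hge', ?_⟩
    · intro i hi
      exact q.adj_getVert_succ (by omega)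
    · intro i j hi hj heq
      exact path_getVert_injective q hqpath i j (by omega) (by omega) heq
    · obtain ⟨i, hi, hle⟩ := hub (q.length + 1) (by omega) q.getVert q.getVert_zero hqy
      exact ⟨i, hi, le_antisymm hle (hge' i hi)⟩
  · -- Part 2
    intro k hk2 w hw0 hwk hadj hinj hge α hlb hex
    obtain ⟨i₀, hi₀, hle₀⟩ := (hf x y).2 k hk2 w hw0 hwk
    have hfeq : f x y = gp G r (w i₀) (w (i₀+1)) := le_antisymm (hge i₀ hi₀) hle₀
    have ha0 : α ≤ G.dist (w i₀) r := hlb i₀ (by omega)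
    have hb0 : α ≤ G.dist (w (i₀+1)) r := hlb (i₀+1) (by omega)
    have hgp0 : f x y = ((G.dist (w i₀) r : ℝ) + (G.dist (w (i₀+1)) r : ℝ) - 1) / 2 := by
      rw [hfeq, gp_adj G r (hadj i₀ hi₀)]
    -- upper bound: f x y ≤ α
    obtain ⟨im, him, hiα⟩ := hex
    have hup : f x y ≤ (α : ℝ) := by
      by_cases hc : im < k - 1
      · have h1 := hge im hc
        rw [gp_adj G r (hadj im hc), hiα] at h1
        have hb : G.dist (w (im+1)) r ≤ α + 1 := by
          calc G.dist (w (im+1)) r ≤ G.dist (w (im+1)) (w im) + G.dist (w im) r :=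
                hconn.dist_triangle
            _ ≤ α + 1 := by
                rw [SimpleGraph.dist_eq_one_iff_adj.2 (hadj im hc).symm, hiα]
                omega
        have hb' : (G.dist (w (im+1)) r : ℝ) ≤ (α : ℝ) + 1 := by exact_mod_cast hb
        linarith
      · have hik : im = k - 1 := by omega
        have hj : k - 2 < k - 1 := by omega
        have hj1 : k - 2 + 1 = k - 1 := by omega
        have h1 := hge (k-2) hj
        rw [gp_adj G r (hadj (k-2) hj)] at h1
        have hwj1 : G.dist (w (k-2+1)) r = α := by rw [hj1, ← hik]; exact hiα
        have ha : G.dist (w (k-2)) r ≤ α + 1 := by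
          calc G.dist (w (k-2)) r ≤ G.dist (w (k-2)) (w (k-2+1)) + G.dist (w (k-2+1)) r :=
                hconn.dist_triangle
            _ ≤ α + 1 := by
                rw [SimpleGraph.dist_eq_one_iff_adj.2 (hadj (k-2) hj), hwj1]
                omega
        rw [hwj1] at h1
        have ha' : (G.dist (w (k-2)) r : ℝ) ≤ (α : ℝ) + 1 := by exact_mod_cast ha
        linarith
    have ha0' : (α : ℝ) ≤ (G.dist (w i₀) r : ℝ) := by exact_mod_cast ha0
    have hb0' : (α : ℝ) ≤ (G.dist (w (i₀+1)) r : ℝ) := by exact_mod_cast hb0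
    constructor
    · rintro ⟨j, hjk, hja, hjb⟩
      have h1 := hge j hjk
      rw [gp_adj G r (hadj j hjk), hja, hjb] at h1
      have : f x y ≥ (α : ℝ) - 1/2 := by rw [hgp0]; linarith
      linarith
    · intro hno
      have hnot : ¬(G.dist (w i₀) r = α ∧ G.dist (w (i₀+1)) r = α) :=
        fun hc => hno ⟨i₀, hi₀, hc⟩
      have hsum : 2*α + 1 ≤ G.dist (w i₀) r + G.dist (w (i₀+1)) r := by omega
      have hsum' : 2*(α:ℝ) + 1 ≤ (G.dist (w i₀) r : ℝ) + (G.dist (w (i₀+1)) r : ℝ) := by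
        exact_mod_cast hsum
      have : (α : ℝ) ≤ f x y := by rw [hgp0]; linarith
      linarith
end

section
/- Let G be a connected finite simple graph with base point r, and let f and d' be as defined. For any two vertices x and y, d'(x,y) = 0 if and only if d(x,r) = d(y,r) = k for some k and there exists a path x = w₁, w₂, …, w_m = y in G (consecutive vertices adjacent) such that d(w_i, r) ≥ k for all 1 ≤ i ≤ m and max(d(w_i, r), d(w_{i+1}, r)) > k for all 1 ≤ i ≤ m−1. -/
section aux

variable {V : Type*} {G : SimpleGraph V}

lemma gp_le_left (hconn : G.Connected) (r a b : V) : gp G r a b ≤ (G.dist a r : ℝ) := by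
  have h : G.dist b r ≤ G.dist b a + G.dist a r := hconn.dist_triangle
  have h2 : G.dist b a = G.dist a b := SimpleGraph.dist_comm
  rw [h2] at h
  have h3 : (G.dist b r : ℝ) ≤ (G.dist a b : ℝ) + (G.dist a r : ℝ) := by exact_mod_cast h
  unfold gp
  linarith

lemma gp_le_right (hconn : G.Connected) (r a b : V) : gp G r a b ≤ (G.dist b r : ℝ) := by
  have h := gp_le_left hconn r b a
  unfold gp at *
  rw [SimpleGraph.dist_comm (u := b) (v := a)] at h
  linarith

lemma dist_getVert_left (hconn : G.Connected) {a b : V} (p : G.Walk a b) (j : ℕ) :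
    G.dist a (p.getVert j) ≤ j := by
  induction j with
  | zero => simp [SimpleGraph.Walk.getVert_zero, SimpleGraph.dist_self]
  | succ j ih =>
    by_cases hj : j < p.length
    · have hadj := p.adj_getVert_succ hj
      have ht : G.dist a (p.getVert (j+1)) ≤
          G.dist a (p.getVert j) + G.dist (p.getVert j) (p.getVert (j+1)) :=
        hconn.dist_triangle
      have h1 : G.dist (p.getVert j) (p.getVert (j+1)) = 1 :=
        SimpleGraph.dist_eq_one_iff_adj.2 hadj
      omega
    · rw [p.getVert_of_length_le (by omega : p.length ≤ j + 1)]
      rw [p.getVert_of_length_le (le_of_not_gt hj)] at ih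
      omega

lemma dist_getVert_right (hconn : G.Connected) {a b : V} (p : G.Walk a b) {j : ℕ}
    (hj : j ≤ p.length) : G.dist (p.getVert j) b ≤ p.length - j := by
  have h1 := dist_getVert_left hconn p.reverse (p.length - j)
  rw [SimpleGraph.Walk.getVert_reverse] at h1
  have h2 : p.length - (p.length - j) = j := by omega
  rw [h2] at h1
  rwa [SimpleGraph.dist_comm]

/-- Key bounds along a geodesic. -/
lemma geodesic_bounds (hconn : G.Connected) (r : V) {a b : V} {k : ℕ}
    (p : G.Walk a b) (hp : p.length = G.dist a b)
    (hk : 2 * k + G.dist a b ≤ G.dist a r + G.dist b r) :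
    (∀ j ≤ p.length, k ≤ G.dist (p.getVert j) r) ∧
    (∀ j < p.length, 2 * k + 1 ≤ G.dist (p.getVert j) r + G.dist (p.getVert (j+1)) r) := by
  have key : ∀ j ≤ p.length, G.dist a r ≤ j + G.dist (p.getVert j) r ∧
      G.dist b r ≤ (p.length - j) + G.dist (p.getVert j) r := by
    intro j hj
    constructor
    · have h1 : G.dist a r ≤ G.dist a (p.getVert j) + G.dist (p.getVert j) r :=
        hconn.dist_triangle
      have h2 := dist_getVert_left hconn p j
      omega
    · have h1 : G.dist b r ≤ G.dist b (p.getVert j) + G.dist (p.getVert j) r :=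
        hconn.dist_triangle
      have h2 := dist_getVert_right hconn p hj
      rw [SimpleGraph.dist_comm (u := b) (v := p.getVert j)] at h1
      omega
  constructor
  · intro j hj
    obtain ⟨h1, h2⟩ := key j hj
    omega
  · intro j hj
    obtain ⟨h1, _⟩ := key j (by omega)
    obtain ⟨_, h2⟩ := key (j+1) (by omega)
    omega

lemma chain_walk (hconn : G.Connected) (r : V) (k : ℕ) (w : ℕ → V) :
    ∀ n : ℕ, 1 ≤ n →
    (∀ i < n, 2 * k + G.dist (w i) (w (i+1)) ≤ G.dist (w i) r + G.dist (w (i+1)) r) →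
    ∃ p : G.Walk (w 0) (w n),
      (∀ j ≤ p.length, k ≤ G.dist (p.getVert j) r) ∧
      (∀ j < p.length, 2 * k + 1 ≤ G.dist (p.getVert j) r + G.dist (p.getVert (j+1)) r) := by
  intro n
  induction n with
  | zero => omega
  | succ n ih =>
    intro _ hyp
    obtain ⟨q, hq⟩ := hconn.exists_walk_length_eq_dist (w n) (w (n+1))
    have hqb := geodesic_bounds hconn r q hq (hyp n (by omega))
    rcases Nat.eq_or_lt_of_le (show 1 ≤ n + 1 by omega) with h1 | h1
    · -- n = 0 : single geodesic
      have hn : n = 0 := by omega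
      subst hn
      exact ⟨q, hqb⟩
    · have hn : 1 ≤ n := by omega
      obtain ⟨p, hp1, hp2⟩ := ih hn (fun i hi => hyp i (by omega))
      refine ⟨p.append q, ?_, ?_⟩
      · intro j hj
        rw [SimpleGraph.Walk.getVert_append]
        split_ifs with h
        · exact hp1 j (by omega)
        · refine hqb.1 (j - p.length) ?_
          rw [SimpleGraph.Walk.length_append] at hj
          omega
      · intro j hj
        rw [SimpleGraph.Walk.length_append] at hj
        rw [SimpleGraph.Walk.getVert_append, SimpleGraph.Walk.getVert_append]
        by_cases h : j < p.length
        · rw [if_pos h]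
          split_ifs with h2
          · exact hp2 j h
          · have hjl : j + 1 = p.length := by omega
            have he : q.getVert (j + 1 - p.length) = p.getVert (j + 1) := by
              rw [hjl]
              simp [SimpleGraph.Walk.getVert_zero, SimpleGraph.Walk.getVert_length]
            rw [he]
            exact hp2 j h
        · rw [if_neg h, if_neg (by omega)]
          have he : j + 1 - p.length = (j - p.length) + 1 := by omega
          rw [he]
          exact hqb.2 (j - p.length) (by omega)

end aux

/-- `d'(x,y) = 0` iff `d(x,r) = d(y,r) = k` and there is a path from `x` to `y` all of
whose vertices are at distance at least `k` from `r`, with no two consecutive vertices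
both at distance exactly `k`. -/
theorem stmt8 {V : Type*} [Fintype V] (G : SimpleGraph V) (hconn : G.Connected) (r : V)
    (f : V → V → ℝ) (hf : ∀ a b, IsFG G r a b (f a b))
    (d' : V → V → ℝ)
    (hd' : ∀ x y, d' x y = (G.dist x r : ℝ) + (G.dist y r : ℝ) - 2 * f x y)
    (x y : V) :
    d' x y = 0 ↔
      ∃ k : ℕ, G.dist x r = k ∧ G.dist y r = k ∧
        ∃ m : ℕ, 1 ≤ m ∧ ∃ w : ℕ → V, w 0 = x ∧ w (m - 1) = y ∧
          (∀ i < m - 1, G.Adj (w i) (w (i + 1))) ∧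
          (∀ i < m, k ≤ G.dist (w i) r) ∧
          (∀ i < m - 1, k < max (G.dist (w i) r) (G.dist (w (i + 1)) r)) := by
  obtain ⟨⟨K, hK2, w, hw0, hwK, hge, _⟩, hub⟩ := hf x y
  -- f x y ≤ dist x r and f x y ≤ dist y r
  have hfx : f x y ≤ (G.dist x r : ℝ) := by
    have h01 := hge 0 (by omega)
    simp only [Nat.zero_add] at h01
    rw [hw0] at h01
    have hb1 := gp_le_left hconn r (w 0) (w 1)
    rw [hw0] at hb1
    linarith
  have hfy : f x y ≤ (G.dist y r : ℝ) := by
    have h01 := hge (K - 2) (by omega)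
    have hidx : K - 2 + 1 = K - 1 := by omega
    rw [hidx, hwK] at h01
    have hb1 := gp_le_right hconn r (w (K - 2)) y
    linarith
  constructor
  · intro h0
    rw [hd'] at h0
    -- equal distances and f = k
    have hxy : (G.dist x r : ℝ) = (G.dist y r : ℝ) := by linarith
    have hfk : f x y = (G.dist x r : ℝ) := by linarith
    set k := G.dist x r with hk
    have hyk : G.dist y r = k := by exact_mod_cast hxy.symm
    -- chain hypothesis in ℕ
    have hyp : ∀ i < K - 1,
        2 * k + G.dist (w i) (w (i+1)) ≤ G.dist (w i) r + G.dist (w (i+1)) r := by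
      intro i hi
      have hg := hge i hi
      rw [hfk] at hg
      unfold gp at hg
      have : (2 * k + G.dist (w i) (w (i+1)) : ℝ) ≤
          (G.dist (w i) r : ℝ) + (G.dist (w (i+1)) r : ℝ) := by
        linarith
      exact_mod_cast this
    obtain ⟨p, hp1, hp2⟩ := chain_walk hconn r k w (K - 1) (by omega) hyp
    refine ⟨k, rfl, hyk, p.length + 1, by omega, p.getVert, ?_, ?_, ?_, ?_, ?_⟩
    · rw [SimpleGraph.Walk.getVert_zero, hw0]
    · simp only [Nat.add_sub_cancel]
      rw [SimpleGraph.Walk.getVert_length, hwK]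
    · intro i hi
      exact p.adj_getVert_succ (by omega)
    · intro i hi
      exact hp1 i (by omega)
    · intro i hi
      have := hp2 i (by omega)
      have hor : k < G.dist (p.getVert i) r ∨ k < G.dist (p.getVert (i+1)) r := by omega
      rcases hor with h | h
      · exact lt_max_of_lt_left h
      · exact lt_max_of_lt_right h
  · rintro ⟨k, hx, hy, m, hm, u, hu0, hum, hadj, hloge, hlmax⟩
    have hfle : f x y ≤ (k : ℝ) := by rw [← hx]; exact hfx
    -- lower bound f x y ≥ k via the chain x, u 0, u 1, ..., u (m-1)
    have hfge : (k : ℝ) ≤ f x y := by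
      set v : ℕ → V := fun i => if i = 0 then x else u (i - 1) with hv
      have hv0 : v 0 = x := by simp [hv]
      have hvm : v ((m + 1) - 1) = y := by
        simp only [hv, Nat.add_sub_cancel]
        rw [if_neg (by omega)]
        rwa [show m - 1 = m - 1 from rfl] at hum
      obtain ⟨i, hi, hile⟩ := hub (m + 1) (by omega) v hv0 hvm
      have hik : (k : ℝ) ≤ gp G r (v i) (v (i + 1)) := by
        rcases Nat.eq_zero_or_pos i with hiz | hipos
        · subst hiz
          have hv1 : v 1 = x := by simp [hv, hu0]
          rw [hv0, hv1]
          unfold gp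
          rw [SimpleGraph.dist_self, hx]
          push_cast
          linarith
        · have hvi : v i = u (i - 1) := by simp [hv]; omega
          have hvi1 : v (i + 1) = u i := by simp [hv]
          rw [hvi, hvi1]
          have him : i - 1 < m - 1 := by omega
          have hadj' := hadj (i - 1) him
          have hiidx : i - 1 + 1 = i := by omega
          rw [hiidx] at hadj'
          have hd1 : G.dist (u (i - 1)) (u i) = 1 :=
            SimpleGraph.dist_eq_one_iff_adj.2 hadj'
          have hg1 := hloge (i - 1) (by omega)
          have hg2 := hloge i (by omega)
          have hg3 := hlmax (i - 1) him
          rw [hiidx] at hg3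
          have hsum : 2 * k + 1 ≤ G.dist (u (i - 1)) r + G.dist (u i) r := by
            rcases max_cases (G.dist (u (i - 1)) r) (G.dist (u i) r) with ⟨he, _⟩ | ⟨he, _⟩ <;>
              rw [he] at hg3 <;> omega
          unfold gp
          rw [hd1]
          have : (2 * k + 1 : ℝ) ≤ (G.dist (u (i - 1)) r : ℝ) + (G.dist (u i) r : ℝ) := by
            exact_mod_cast hsum
          push_cast
          linarith
      linarith
    rw [hd', hx, hy]
    have : f x y = (k : ℝ) := le_antisymm hfle hfge
    rw [this]
    ring
end

section
/- Let G be a connected finite simple graph and B a set of vertices such that d(x,y) ≤ k for all x, y ∈ B, where d is the distance in G. Let δ̂ ≥ 0 be such that for every connected component C of the graph G − B, every four vertices a, b, c, d lying in C ∪ B satisfy d(a,b) + d(c,d) ≤ max(d(a,c) + d(b,d), d(a,d) + d(b,c)) + 2δ̂ (distances taken in G). Then every four vertices a, b, c, d of G satisfy d(a,b) + d(c,d) ≤ max(d(a,c) + d(b,d), d(a,d) + d(b,c)) + 2(k + δ̂); that is, G satisfies the four-point condition with constant k + δ̂. -/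
open SimpleGraph

/-- A walk avoiding `B` gives reachability in the induced graph on `Bᶜ`. -/
lemma walk_reach {V : Type*} (G : SimpleGraph V) (B : Set V) :
    ∀ {u v : V} (p : G.Walk u v), (∀ x ∈ p.support, x ∈ Bᶜ) →
      ∀ (hu : u ∈ Bᶜ) (hv : v ∈ Bᶜ),
      (G.induce Bᶜ).Reachable ⟨u, hu⟩ ⟨v, hv⟩ := by
  intro u v p
  induction p with
  | nil => intro _ hu hv; exact Reachable.refl _
  | @cons u w v h q ih =>
    intro hp hu hv
    have hw : w ∈ Bᶜ := hp w (by simp [SimpleGraph.Walk.support_cons])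
    have h1 : (G.induce Bᶜ).Adj ⟨u, hu⟩ ⟨w, hw⟩ := by
      simpa using h
    exact (h1.reachable).trans
      (ih (fun x hx => hp x (by simp [SimpleGraph.Walk.support_cons, hx])) hw hv)

/-- If `u, v` lie outside `B` in distinct components of `G - B`, then some shortest
`u`-`v` walk passes through a vertex of `B`. -/
lemma gate_exists {V : Type*} (G : SimpleGraph V) (hconn : G.Connected) (B : Set V)
    {u v : V} (hu : u ∈ Bᶜ) (hv : v ∈ Bᶜ)
    (hne : (G.induce Bᶜ).connectedComponentMk ⟨u, hu⟩ ≠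
      (G.induce Bᶜ).connectedComponentMk ⟨v, hv⟩) :
    ∃ w ∈ B, G.dist u w + G.dist w v ≤ G.dist u v := by
  classical
  obtain ⟨p, hp⟩ := (hconn u v).exists_walk_length_eq_dist
  have hwB : ∃ w ∈ p.support, w ∈ B := by
    by_contra h
    push_neg at h
    exact hne (ConnectedComponent.sound (walk_reach G B p (fun x hx => h x hx) hu hv))
  obtain ⟨w, hwp, hwB⟩ := hwB
  refine ⟨w, hwB, ?_⟩
  calc G.dist u w + G.dist w v
      ≤ (p.takeUntil w hwp).length + (p.dropUntil w hwp).length :=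
        add_le_add (SimpleGraph.dist_le _) (SimpleGraph.dist_le _)
    _ = p.length := by rw [← SimpleGraph.Walk.length_append, SimpleGraph.Walk.take_spec]
    _ = G.dist u v := hp

/-- Case A: if both "cross" pairs admit gates in `B`, the four-point sum is controlled. -/
lemma caseA {V : Type*} (G : SimpleGraph V) (hconn : G.Connected) (B : Set V) (k : ℕ)
    (hB : ∀ x ∈ B, ∀ y ∈ B, G.dist x y ≤ k) {a b c d : V}
    (g1 : ∃ w ∈ B, G.dist a w + G.dist w c ≤ G.dist a c)
    (g2 : ∃ w ∈ B, G.dist b w + G.dist w d ≤ G.dist b d) :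
    G.dist a b + G.dist c d ≤ G.dist a c + G.dist b d + 2 * k := by
  obtain ⟨w, hw, h1⟩ := g1
  obtain ⟨w', hw', h2⟩ := g2
  have t1 : G.dist a b ≤ G.dist a w + G.dist w b := hconn.dist_triangle
  have t2 : G.dist w b ≤ G.dist w w' + G.dist w' b := hconn.dist_triangle
  have t3 : G.dist c d ≤ G.dist c w + G.dist w d := hconn.dist_triangle
  have t4 : G.dist w d ≤ G.dist w w' + G.dist w' d := hconn.dist_triangle
  have hk : G.dist w w' ≤ k := hB w hw w' hw'
  have e1 : G.dist w c = G.dist c w := G.dist_comm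
  have e2 : G.dist b w' = G.dist w' b := G.dist_comm
  have e3 : G.dist w' d = G.dist w' d := rfl
  omega

/-- Case C: odd vertex `a` has gates to `c` and `d`, and the quadruple condition
holds for every `B`-vertex substituted for `a`. -/
lemma caseC {V : Type*} (G : SimpleGraph V) (hconn : G.Connected) (B : Set V) (k : ℕ)
    (hB : ∀ x ∈ B, ∀ y ∈ B, G.dist x y ≤ k) (δ : ℝ) {a b c d : V}
    (hquad : ∀ w ∈ B, (G.dist w b : ℝ) + (G.dist c d : ℝ) ≤
      max ((G.dist w c : ℝ) + (G.dist b d : ℝ)) ((G.dist w d : ℝ) + (G.dist b c : ℝ)) + 2 * δ)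
    (gc : ∃ w ∈ B, G.dist a w + G.dist w c ≤ G.dist a c)
    (gd : ∃ w ∈ B, G.dist a w + G.dist w d ≤ G.dist a d) :
    (G.dist a b : ℝ) + (G.dist c d : ℝ) ≤
      max ((G.dist a c : ℝ) + (G.dist b d : ℝ)) ((G.dist a d : ℝ) + (G.dist b c : ℝ))
        + 2 * ((k : ℝ) + δ) := by
  obtain ⟨wc, hwc, hgc⟩ := gc
  obtain ⟨wd, hwd, hgd⟩ := gd
  have t1 : G.dist a b ≤ G.dist a wc + G.dist wc b := hconn.dist_triangle
  have hq := hquad wc hwc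
  -- bound the two branches
  have br1 : G.dist a wc + G.dist wc c ≤ G.dist a c := hgc
  have br2 : G.dist a wc + G.dist wc d ≤ G.dist a d + 2 * k := by
    have u1 : G.dist a wc ≤ G.dist a wd + G.dist wd wc := hconn.dist_triangle
    have u2 : G.dist wc d ≤ G.dist wc wd + G.dist wd d := hconn.dist_triangle
    have hk1 : G.dist wd wc ≤ k := hB wd hwd wc hwc
    have hk2 : G.dist wc wd ≤ k := hB wc hwc wd hwd
    omega
  have br1' : (G.dist a wc : ℝ) + (G.dist wc c : ℝ) ≤ (G.dist a c : ℝ) := by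
    exact_mod_cast br1
  have br2' : (G.dist a wc : ℝ) + (G.dist wc d : ℝ) ≤ (G.dist a d : ℝ) + 2 * k := by
    exact_mod_cast br2
  have t1' : (G.dist a b : ℝ) ≤ (G.dist a wc : ℝ) + (G.dist wc b : ℝ) := by
    exact_mod_cast t1
  have hk0 : (0 : ℝ) ≤ (k : ℝ) := Nat.cast_nonneg k
  rcases le_total ((G.dist wc c : ℝ) + (G.dist b d : ℝ))
      ((G.dist wc d : ℝ) + (G.dist b c : ℝ)) with h | h
  · rw [max_eq_right h] at hq
    have : (G.dist a d : ℝ) + (G.dist b c : ℝ) ≤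
        max ((G.dist a c : ℝ) + (G.dist b d : ℝ)) ((G.dist a d : ℝ) + (G.dist b c : ℝ)) :=
      le_max_right _ _
    linarith
  · rw [max_eq_left h] at hq
    have : (G.dist a c : ℝ) + (G.dist b d : ℝ) ≤
        max ((G.dist a c : ℝ) + (G.dist b d : ℝ)) ((G.dist a d : ℝ) + (G.dist b c : ℝ)) :=
      le_max_left _ _
    linarith

/-- If `B` has `G`-diameter at most `k` and every quadruple of vertices lying in
`C ∪ B` for a single connected component `C` of `G - B` satisfies the four-point
condition with constant `δ̂`, then `G` satisfies the four-point condition with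
constant `k + δ̂`. -/
theorem stmt9 {V : Type*} [Fintype V] (G : SimpleGraph V) (hconn : G.Connected)
    (B : Set V) (k : ℕ) (hB : ∀ x ∈ B, ∀ y ∈ B, G.dist x y ≤ k)
    (δ : ℝ) (hδ : 0 ≤ δ)
    (hcomp : ∀ C : (G.induce Bᶜ).ConnectedComponent,
      ∀ a b c d : V,
        (a ∈ B ∨ ∃ ha : a ∈ Bᶜ, (G.induce Bᶜ).connectedComponentMk ⟨a, ha⟩ = C) →
        (b ∈ B ∨ ∃ hb : b ∈ Bᶜ, (G.induce Bᶜ).connectedComponentMk ⟨b, hb⟩ = C) →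
        (c ∈ B ∨ ∃ hc : c ∈ Bᶜ, (G.induce Bᶜ).connectedComponentMk ⟨c, hc⟩ = C) →
        (d ∈ B ∨ ∃ hd : d ∈ Bᶜ, (G.induce Bᶜ).connectedComponentMk ⟨d, hd⟩ = C) →
        (G.dist a b : ℝ) + (G.dist c d : ℝ) ≤
          max ((G.dist a c : ℝ) + (G.dist b d : ℝ)) ((G.dist a d : ℝ) + (G.dist b c : ℝ))
            + 2 * δ)
    (a b c d : V) :
    (G.dist a b : ℝ) + (G.dist c d : ℝ) ≤
      max ((G.dist a c : ℝ) + (G.dist b d : ℝ)) ((G.dist a d : ℝ) + (G.dist b c : ℝ))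
        + 2 * ((k : ℝ) + δ) := by
  classical
  set H := G.induce Bᶜ with hH
  -- `Same u v` : both outside `B` and in the same component of `G - B`.
  -- A gate to `B` exists between `u` and `v` whenever `¬ Same u v`.
  have gate : ∀ u v : V,
      ¬ (∃ (hu : u ∈ Bᶜ) (hv : v ∈ Bᶜ),
          H.connectedComponentMk ⟨u, hu⟩ = H.connectedComponentMk ⟨v, hv⟩) →
      ∃ w ∈ B, G.dist u w + G.dist w v ≤ G.dist u v := by
    intro u v h
    by_cases hu : u ∈ B
    · exact ⟨u, hu, by simp [G.dist_self]⟩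
    by_cases hv : v ∈ B
    · exact ⟨v, hv, by simp [G.dist_self]⟩
    · exact gate_exists G hconn B hu hv (fun heq => h ⟨hu, hv, heq⟩)
  have hk0 : (0 : ℝ) ≤ (k : ℝ) := Nat.cast_nonneg k
  -- convenient wrapper for case A
  have doA : (∃ w ∈ B, G.dist a w + G.dist w c ≤ G.dist a c) →
      (∃ w ∈ B, G.dist b w + G.dist w d ≤ G.dist b d) →
      (G.dist a b : ℝ) + (G.dist c d : ℝ) ≤
        max ((G.dist a c : ℝ) + (G.dist b d : ℝ)) ((G.dist a d : ℝ) + (G.dist b c : ℝ))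
          + 2 * ((k : ℝ) + δ) := by
    intro g1 g2
    have h1 := caseA G hconn B k hB g1 g2
    have h1' : (G.dist a b : ℝ) + (G.dist c d : ℝ) ≤
        (G.dist a c : ℝ) + (G.dist b d : ℝ) + 2 * k := by exact_mod_cast h1
    have h2 : (G.dist a c : ℝ) + (G.dist b d : ℝ) ≤
        max ((G.dist a c : ℝ) + (G.dist b d : ℝ)) ((G.dist a d : ℝ) + (G.dist b c : ℝ)) :=
      le_max_left _ _
    linarith
  have doA' : (∃ w ∈ B, G.dist a w + G.dist w d ≤ G.dist a d) →
      (∃ w ∈ B, G.dist b w + G.dist w c ≤ G.dist b c) →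
      (G.dist a b : ℝ) + (G.dist c d : ℝ) ≤
        max ((G.dist a c : ℝ) + (G.dist b d : ℝ)) ((G.dist a d : ℝ) + (G.dist b c : ℝ))
          + 2 * ((k : ℝ) + δ) := by
    intro g1 g2
    have h1 := caseA G hconn B k hB g1 g2
    have e : G.dist c d = G.dist d c := G.dist_comm
    have h1' : (G.dist a b : ℝ) + (G.dist c d : ℝ) ≤
        (G.dist a d : ℝ) + (G.dist b c : ℝ) + 2 * k := by
      rw [e]; exact_mod_cast h1
    have h2 : (G.dist a d : ℝ) + (G.dist b c : ℝ) ≤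
        max ((G.dist a c : ℝ) + (G.dist b d : ℝ)) ((G.dist a d : ℝ) + (G.dist b c : ℝ)) :=
      le_max_right _ _
    linarith
  by_cases hall : ∃ C : H.ConnectedComponent,
      (a ∈ B ∨ ∃ ha : a ∈ Bᶜ, H.connectedComponentMk ⟨a, ha⟩ = C) ∧
      (b ∈ B ∨ ∃ hb : b ∈ Bᶜ, H.connectedComponentMk ⟨b, hb⟩ = C) ∧
      (c ∈ B ∨ ∃ hc : c ∈ Bᶜ, H.connectedComponentMk ⟨c, hc⟩ = C) ∧
      (d ∈ B ∨ ∃ hd : d ∈ Bᶜ, H.connectedComponentMk ⟨d, hd⟩ = C)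
  · obtain ⟨C, h1, h2, h3, h4⟩ := hall
    have := hcomp C a b c d h1 h2 h3 h4
    linarith
  · rw [not_exists] at hall
    by_cases h1 : ∃ (hu : a ∈ Bᶜ) (hv : c ∈ Bᶜ),
        H.connectedComponentMk ⟨a, hu⟩ = H.connectedComponentMk ⟨c, hv⟩
    · obtain ⟨ha, hc, hac⟩ := h1
      by_cases h2 : ∃ (hu : a ∈ Bᶜ) (hv : d ∈ Bᶜ),
          H.connectedComponentMk ⟨a, hu⟩ = H.connectedComponentMk ⟨d, hv⟩
      · -- a, c, d in a common component C; odd vertex b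
        obtain ⟨_, hd, had⟩ := h2
        set C := H.connectedComponentMk ⟨a, ha⟩ with hC
        have hnb : ¬(b ∈ B ∨ ∃ hb : b ∈ Bᶜ, H.connectedComponentMk ⟨b, hb⟩ = C) :=
          fun h => hall C ⟨Or.inr ⟨ha, rfl⟩, h, Or.inr ⟨hc, hac.symm⟩, Or.inr ⟨hd, had.symm⟩⟩
        push_neg at hnb
        obtain ⟨hbB, hbC⟩ := hnb
        have gba : ∃ w ∈ B, G.dist b w + G.dist w a ≤ G.dist b a :=
          gate b a (fun ⟨hu, hv, he⟩ => hbC hu (he.trans rfl))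
        have gbc : ∃ w ∈ B, G.dist b w + G.dist w c ≤ G.dist b c :=
          gate b c (fun ⟨hu, hv, he⟩ => hbC hu (he.trans hac.symm))
        have gbd : ∃ w ∈ B, G.dist b w + G.dist w d ≤ G.dist b d :=
          gate b d (fun ⟨hu, hv, he⟩ => hbC hu (he.trans had.symm))
        have hquad : ∀ w ∈ B, (G.dist w a : ℝ) + (G.dist d c : ℝ) ≤
            max ((G.dist w d : ℝ) + (G.dist a c : ℝ)) ((G.dist w c : ℝ) + (G.dist a d : ℝ))
              + 2 * δ := by
          intro w hw
          exact hcomp C w a d c (Or.inl hw) (Or.inr ⟨ha, rfl⟩)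
            (Or.inr ⟨hd, had.symm⟩) (Or.inr ⟨hc, hac.symm⟩)
        have := caseC G hconn B k hB δ (a := b) (b := a) (c := d) (d := c) hquad gbd gbc
        have e1 : G.dist b a = G.dist a b := G.dist_comm
        have e2 : G.dist d c = G.dist c d := G.dist_comm
        have e3 : G.dist b d = G.dist d b := G.dist_comm
        have e4 : G.dist a c = G.dist c a := G.dist_comm
        have e5 : G.dist b c = G.dist c b := G.dist_comm
        have e6 : G.dist a d = G.dist d a := G.dist_comm
        rw [e1, e2] at this
        calc (G.dist a b : ℝ) + (G.dist c d : ℝ)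
            ≤ max ((G.dist b d : ℝ) + (G.dist a c : ℝ)) ((G.dist b c : ℝ) + (G.dist a d : ℝ))
              + 2 * ((k : ℝ) + δ) := this
          _ = max ((G.dist a c : ℝ) + (G.dist b d : ℝ)) ((G.dist a d : ℝ) + (G.dist b c : ℝ))
              + 2 * ((k : ℝ) + δ) := by rw [add_comm ((G.dist b d : ℝ)), add_comm ((G.dist b c : ℝ))]
      · by_cases h3 : ∃ (hu : b ∈ Bᶜ) (hv : c ∈ Bᶜ),
            H.connectedComponentMk ⟨b, hu⟩ = H.connectedComponentMk ⟨c, hv⟩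
        · -- a, b, c in a common component; odd vertex d
          obtain ⟨hb, _, hbc⟩ := h3
          set C := H.connectedComponentMk ⟨a, ha⟩ with hC
          have hbCeq : H.connectedComponentMk ⟨b, hb⟩ = C := hbc.trans hac.symm
          have hnd : ¬(d ∈ B ∨ ∃ hd : d ∈ Bᶜ, H.connectedComponentMk ⟨d, hd⟩ = C) :=
            fun h => hall C ⟨Or.inr ⟨ha, rfl⟩, Or.inr ⟨hb, hbCeq⟩, Or.inr ⟨hc, hac.symm⟩, h⟩
          push_neg at hnd
          obtain ⟨hdB, hdC⟩ := hnd
          have gdb : ∃ w ∈ B, G.dist d w + G.dist w b ≤ G.dist d b :=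
            gate d b (fun ⟨hu, hv, he⟩ => hdC hu (he.trans hbCeq))
          have gda : ∃ w ∈ B, G.dist d w + G.dist w a ≤ G.dist d a :=
            gate d a (fun ⟨hu, hv, he⟩ => hdC hu (he.trans rfl))
          have hquad : ∀ w ∈ B, (G.dist w c : ℝ) + (G.dist b a : ℝ) ≤
              max ((G.dist w b : ℝ) + (G.dist c a : ℝ)) ((G.dist w a : ℝ) + (G.dist c b : ℝ))
                + 2 * δ := by
            intro w hw
            exact hcomp C w c b a (Or.inl hw) (Or.inr ⟨hc, hac.symm⟩)
              (Or.inr ⟨hb, hbCeq⟩) (Or.inr ⟨ha, rfl⟩)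
          have := caseC G hconn B k hB δ (a := d) (b := c) (c := b) (d := a) hquad gdb gda
          have e1 : G.dist d c = G.dist c d := G.dist_comm
          have e2 : G.dist b a = G.dist a b := G.dist_comm
          have e3 : G.dist d b = G.dist b d := G.dist_comm
          have e4 : G.dist c a = G.dist a c := G.dist_comm
          have e5 : G.dist d a = G.dist a d := G.dist_comm
          have e6 : G.dist c b = G.dist b c := G.dist_comm
          rw [e1, e2, e3, e4, e5, e6] at this
          calc (G.dist a b : ℝ) + (G.dist c d : ℝ)
              = (G.dist c d : ℝ) + (G.dist a b : ℝ) := by ring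
            _ ≤ max ((G.dist b d : ℝ) + (G.dist a c : ℝ)) ((G.dist a d : ℝ) + (G.dist b c : ℝ))
                + 2 * ((k : ℝ) + δ) := this
            _ = max ((G.dist a c : ℝ) + (G.dist b d : ℝ)) ((G.dist a d : ℝ) + (G.dist b c : ℝ))
                + 2 * ((k : ℝ) + δ) := by rw [add_comm ((G.dist b d : ℝ))]
        · -- ¬Same a d (h2) ∧ ¬Same b c (h3) : case A'
          exact doA' (gate a d h2) (gate b c h3)
    · by_cases h2 : ∃ (hu : b ∈ Bᶜ) (hv : d ∈ Bᶜ),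
          H.connectedComponentMk ⟨b, hu⟩ = H.connectedComponentMk ⟨d, hv⟩
      · obtain ⟨hb, hd, hbd⟩ := h2
        by_cases h3 : ∃ (hu : a ∈ Bᶜ) (hv : d ∈ Bᶜ),
            H.connectedComponentMk ⟨a, hu⟩ = H.connectedComponentMk ⟨d, hv⟩
        · -- a, b, d in a common component; odd vertex c
          obtain ⟨ha, _, had⟩ := h3
          set C := H.connectedComponentMk ⟨b, hb⟩ with hC
          have haCeq : H.connectedComponentMk ⟨a, ha⟩ = C := by
            exact had.trans hbd.symm
          have hnc : ¬(c ∈ B ∨ ∃ hc : c ∈ Bᶜ, H.connectedComponentMk ⟨c, hc⟩ = C) :=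
            fun h => hall C ⟨Or.inr ⟨ha, haCeq⟩, Or.inr ⟨hb, rfl⟩, h, Or.inr ⟨hd, hbd.symm⟩⟩
          push_neg at hnc
          obtain ⟨hcB, hcC⟩ := hnc
          have gca : ∃ w ∈ B, G.dist c w + G.dist w a ≤ G.dist c a :=
            gate c a (fun ⟨hu, hv, he⟩ => hcC hu (he.trans haCeq))
          have gcb : ∃ w ∈ B, G.dist c w + G.dist w b ≤ G.dist c b :=
            gate c b (fun ⟨hu, hv, he⟩ => hcC hu (he.trans rfl))
          have hquad : ∀ w ∈ B, (G.dist w d : ℝ) + (G.dist a b : ℝ) ≤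
              max ((G.dist w a : ℝ) + (G.dist d b : ℝ)) ((G.dist w b : ℝ) + (G.dist d a : ℝ))
                + 2 * δ := by
            intro w hw
            exact hcomp C w d a b (Or.inl hw) (Or.inr ⟨hd, hbd.symm⟩)
              (Or.inr ⟨ha, haCeq⟩) (Or.inr ⟨hb, rfl⟩)
          have := caseC G hconn B k hB δ (a := c) (b := d) (c := a) (d := b) hquad gca gcb
          have e1 : G.dist c d = G.dist c d := rfl
          have e2 : G.dist c a = G.dist a c := G.dist_comm
          have e3 : G.dist d b = G.dist b d := G.dist_comm
          have e4 : G.dist c b = G.dist b c := G.dist_comm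
          have e5 : G.dist d a = G.dist a d := G.dist_comm
          rw [e2, e3, e4, e5] at this
          calc (G.dist a b : ℝ) + (G.dist c d : ℝ)
              = (G.dist c d : ℝ) + (G.dist a b : ℝ) := by ring
            _ ≤ max ((G.dist a c : ℝ) + (G.dist b d : ℝ)) ((G.dist b c : ℝ) + (G.dist a d : ℝ))
                + 2 * ((k : ℝ) + δ) := this
            _ = max ((G.dist a c : ℝ) + (G.dist b d : ℝ)) ((G.dist a d : ℝ) + (G.dist b c : ℝ))
                + 2 * ((k : ℝ) + δ) := by rw [add_comm ((G.dist b c : ℝ))]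
        · by_cases h4 : ∃ (hu : b ∈ Bᶜ) (hv : c ∈ Bᶜ),
              H.connectedComponentMk ⟨b, hu⟩ = H.connectedComponentMk ⟨c, hv⟩
          · -- b, c, d in a common component; odd vertex a
            obtain ⟨_, hc, hbc⟩ := h4
            set C := H.connectedComponentMk ⟨b, hb⟩ with hC
            have hna : ¬(a ∈ B ∨ ∃ ha : a ∈ Bᶜ, H.connectedComponentMk ⟨a, ha⟩ = C) :=
              fun h => hall C ⟨h, Or.inr ⟨hb, rfl⟩, Or.inr ⟨hc, hbc.symm⟩, Or.inr ⟨hd, hbd.symm⟩⟩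
            push_neg at hna
            obtain ⟨haB, haC⟩ := hna
            have gac : ∃ w ∈ B, G.dist a w + G.dist w c ≤ G.dist a c :=
              gate a c (fun ⟨hu, hv, he⟩ => haC hu (he.trans hbc.symm))
            have gad : ∃ w ∈ B, G.dist a w + G.dist w d ≤ G.dist a d :=
              gate a d (fun ⟨hu, hv, he⟩ => haC hu (he.trans hbd.symm))
            have hquad : ∀ w ∈ B, (G.dist w b : ℝ) + (G.dist c d : ℝ) ≤
                max ((G.dist w c : ℝ) + (G.dist b d : ℝ)) ((G.dist w d : ℝ) + (G.dist b c : ℝ))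
                  + 2 * δ := by
              intro w hw
              exact hcomp C w b c d (Or.inl hw) (Or.inr ⟨hb, rfl⟩)
                (Or.inr ⟨hc, hbc.symm⟩) (Or.inr ⟨hd, hbd.symm⟩)
            exact caseC G hconn B k hB δ hquad gac gad
          · -- ¬Same a d (h3) ∧ ¬Same b c (h4) : case A'
            exact doA' (gate a d h3) (gate b c h4)
      · -- ¬Same a c ∧ ¬Same b d : case A
        exact doA (gate a c h1) (gate b d h2)
end

section
/- Let G be a connected finite simple graph and let 2δ be the maximum over all quadruples of vertices (a,b,c,d) of d(a,b) + d(c,d) − max(d(a,c) + d(b,d), d(a,d) + d(b,c)). Then there exist four vertices u₁, u₂, u₃, u₄ such that d(u₁,u₃) + d(u₂,u₄) = max(d(u₁,u₂) + d(u₃,u₄), d(u₁,u₄) + d(u₂,u₃)) + 2δ, and additionally for every i ∈ {1,2,3,4} and every neighbor w of u_i, d(w, u_{i+2}) ≤ d(u_i, u_{i+2}), where the index arithmetic is modulo 4. -/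
private lemma key10 {V : Type*} [Fintype V] (G : SimpleGraph V) (hconn : G.Connected)
    (δ : ℝ)
    (hub : ∀ a b c d : V,
      (G.dist a b : ℝ) + G.dist c d -
        max ((G.dist a c : ℝ) + G.dist b d) ((G.dist a d : ℝ) + G.dist b c) ≤ 2 * δ)
    (a b c d : V)
    (heq : (G.dist a b : ℝ) + G.dist c d -
        max ((G.dist a c : ℝ) + G.dist b d) ((G.dist a d : ℝ) + G.dist b c) = 2 * δ)
    (hmaxF : ∀ a' b' c' d' : V,
      (G.dist a' b' : ℝ) + G.dist c' d' -
        max ((G.dist a' c' : ℝ) + G.dist b' d') ((G.dist a' d' : ℝ) + G.dist b' c') = 2 * δ →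
      G.dist a' b' + G.dist c' d' ≤ G.dist a b + G.dist c d)
    (w : V) (hadj : G.Adj a w) : G.dist w b ≤ G.dist a b := by
  by_contra h
  push_neg at h
  have hwa : G.dist w a = 1 := SimpleGraph.dist_eq_one_iff_adj.2 hadj.symm
  have htri : G.dist w b ≤ G.dist w a + G.dist a b := hconn.dist_triangle
  have hwb : G.dist w b = G.dist a b + 1 := by omega
  have hwc : G.dist w c ≤ G.dist a c + 1 := by
    have := hconn.dist_triangle (u := w) (v := a) (w := c); omega
  have hwd : G.dist w d ≤ G.dist a d + 1 := by
    have := hconn.dist_triangle (u := w) (v := a) (w := d); omega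
  -- the new quadruple (w, b, c, d)
  have hub' := hub w b c d
  have hge : (2 : ℝ) * δ ≤ (G.dist w b : ℝ) + G.dist c d -
      max ((G.dist w c : ℝ) + G.dist b d) ((G.dist w d : ℝ) + G.dist b c) := by
    have h1 : ((G.dist w c : ℝ) + G.dist b d) ≤ ((G.dist a c : ℝ) + G.dist b d) + 1 := by
      have : (G.dist w c : ℝ) ≤ (G.dist a c : ℝ) + 1 := by exact_mod_cast hwc
      linarith
    have h2 : ((G.dist w d : ℝ) + G.dist b c) ≤ ((G.dist a d : ℝ) + G.dist b c) + 1 := by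
      have : (G.dist w d : ℝ) ≤ (G.dist a d : ℝ) + 1 := by exact_mod_cast hwd
      linarith
    have hmaxle : max ((G.dist w c : ℝ) + G.dist b d) ((G.dist w d : ℝ) + G.dist b c) ≤
        max ((G.dist a c : ℝ) + G.dist b d) ((G.dist a d : ℝ) + G.dist b c) + 1 := by
      apply max_le
      · linarith [le_max_left ((G.dist a c : ℝ) + G.dist b d) ((G.dist a d : ℝ) + G.dist b c)]
      · linarith [le_max_right ((G.dist a c : ℝ) + G.dist b d) ((G.dist a d : ℝ) + G.dist b c)]
    have hwbR : (G.dist w b : ℝ) = (G.dist a b : ℝ) + 1 := by exact_mod_cast hwb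
    linarith
  have heq' : (G.dist w b : ℝ) + G.dist c d -
      max ((G.dist w c : ℝ) + G.dist b d) ((G.dist w d : ℝ) + G.dist b c) = 2 * δ :=
    le_antisymm hub' hge
  have := hmaxF w b c d heq'
  omega

/-- If `2δ` is the maximum over all quadruples of `d(a,b) + d(c,d) - max(d(a,c) + d(b,d),
d(a,d) + d(b,c))`, then there is a quadruple attaining it in which each `u_i` cannot be
moved to a neighbor while increasing its distance to `u_{i+2}` (indices mod 4). -/
theorem stmt10 {V : Type*} [Fintype V] (G : SimpleGraph V) (hconn : G.Connected)
    (δ : ℝ)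
    (hmax : IsGreatest {m : ℝ | ∃ a b c d : V,
        m = (G.dist a b : ℝ) + (G.dist c d : ℝ) -
          max ((G.dist a c : ℝ) + (G.dist b d : ℝ))
            ((G.dist a d : ℝ) + (G.dist b c : ℝ))} (2 * δ)) :
    ∃ u : Fin 4 → V,
      (G.dist (u 0) (u 2) : ℝ) + (G.dist (u 1) (u 3) : ℝ) =
        max ((G.dist (u 0) (u 1) : ℝ) + (G.dist (u 2) (u 3) : ℝ))
          ((G.dist (u 0) (u 3) : ℝ) + (G.dist (u 1) (u 2) : ℝ)) + 2 * δ ∧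
      ∀ i : Fin 4, ∀ w : V, G.Adj (u i) w →
        G.dist w (u (i + 2)) ≤ G.dist (u i) (u (i + 2)) := by
  classical
  obtain ⟨⟨a₀, b₀, c₀, d₀, heq₀⟩, hub⟩ := hmax
  have hub' : ∀ a b c d : V,
      (G.dist a b : ℝ) + G.dist c d -
        max ((G.dist a c : ℝ) + G.dist b d) ((G.dist a d : ℝ) + G.dist b c) ≤ 2 * δ := by
    intro a b c d
    exact hub ⟨a, b, c, d, rfl⟩
  -- pick a quadruple attaining 2δ with maximal diagonal sum
  set s : Finset (V × V × V × V) := Finset.univ.filter (fun p =>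
    (G.dist p.1 p.2.1 : ℝ) + G.dist p.2.2.1 p.2.2.2 -
      max ((G.dist p.1 p.2.2.1 : ℝ) + G.dist p.2.1 p.2.2.2)
        ((G.dist p.1 p.2.2.2 : ℝ) + G.dist p.2.1 p.2.2.1) = 2 * δ) with hs
  have hsne : s.Nonempty := ⟨(a₀, b₀, c₀, d₀), by simp [hs, heq₀.symm]⟩
  obtain ⟨p, hp, hpmax⟩ := s.exists_max_image
    (fun p => G.dist p.1 p.2.1 + G.dist p.2.2.1 p.2.2.2) hsne
  obtain ⟨a, b, c, d⟩ := p
  simp only [hs, Finset.mem_filter, Finset.mem_univ, true_and] at hp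
  have hpmax' : ∀ a' b' c' d' : V,
      (G.dist a' b' : ℝ) + G.dist c' d' -
        max ((G.dist a' c' : ℝ) + G.dist b' d') ((G.dist a' d' : ℝ) + G.dist b' c') = 2 * δ →
      G.dist a' b' + G.dist c' d' ≤ G.dist a b + G.dist c d := by
    intro a' b' c' d' h
    exact hpmax (a', b', c', d') (by simp [hs, h])
  refine ⟨![a, c, b, d], ?_, ?_⟩
  all_goals have dc : ∀ x y : V, G.dist x y = G.dist y x := fun x y => SimpleGraph.dist_comm
  · show (G.dist a b : ℝ) + G.dist c d =
      max ((G.dist a c : ℝ) + G.dist b d) ((G.dist a d : ℝ) + G.dist c b) + 2 * δ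
    rw [dc c b]
    linarith [hp]
  · -- symmetric versions of hp and hpmax'
    have hp2 : (G.dist b a : ℝ) + G.dist c d -
        max ((G.dist b c : ℝ) + G.dist a d) ((G.dist b d : ℝ) + G.dist a c) = 2 * δ := by
      have h := hp
      simp only [dc, add_comm, max_comm] at h ⊢
      linarith [h]
    have hp3 : (G.dist c d : ℝ) + G.dist a b -
        max ((G.dist c a : ℝ) + G.dist d b) ((G.dist c b : ℝ) + G.dist d a) = 2 * δ := by
      have h := hp
      simp only [dc, add_comm, max_comm] at h ⊢
      linarith [h]
    have hp4 : (G.dist d c : ℝ) + G.dist a b -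
        max ((G.dist d a : ℝ) + G.dist c b) ((G.dist d b : ℝ) + G.dist c a) = 2 * δ := by
      have h := hp
      simp only [dc, add_comm, max_comm] at h ⊢
      linarith [h]
    have hm2 : ∀ a' b' c' d' : V,
        (G.dist a' b' : ℝ) + G.dist c' d' -
          max ((G.dist a' c' : ℝ) + G.dist b' d') ((G.dist a' d' : ℝ) + G.dist b' c') = 2 * δ →
        G.dist a' b' + G.dist c' d' ≤ G.dist b a + G.dist c d := by
      intro a' b' c' d' h; rw [dc b a]; exact hpmax' a' b' c' d' h
    have hm3 : ∀ a' b' c' d' : V,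
        (G.dist a' b' : ℝ) + G.dist c' d' -
          max ((G.dist a' c' : ℝ) + G.dist b' d') ((G.dist a' d' : ℝ) + G.dist b' c') = 2 * δ →
        G.dist a' b' + G.dist c' d' ≤ G.dist c d + G.dist a b := by
      intro a' b' c' d' h
      have := hpmax' a' b' c' d' h; omega
    have hm4 : ∀ a' b' c' d' : V,
        (G.dist a' b' : ℝ) + G.dist c' d' -
          max ((G.dist a' c' : ℝ) + G.dist b' d') ((G.dist a' d' : ℝ) + G.dist b' c') = 2 * δ →
        G.dist a' b' + G.dist c' d' ≤ G.dist d c + G.dist a b := by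
      intro a' b' c' d' h
      have := hpmax' a' b' c' d' h; rw [dc d c]; omega
    intro i w hadj
    fin_cases i
    · exact key10 G hconn δ hub' a b c d hp hpmax' w hadj
    · exact key10 G hconn δ hub' c d a b hp3 hm3 w hadj
    · exact key10 G hconn δ hub' b a c d hp2 hm2 w hadj
    · exact key10 G hconn δ hub' d c a b hp4 hm4 w hadj
end

section
/- Let G be a connected finite simple graph and u₁, u₂, u₃, u₄ any four vertices. Set S₁ = d(u₁,u₃) + d(u₂,u₄), S₂ = d(u₁,u₄) + d(u₂,u₃), S₃ = d(u₁,u₂) + d(u₃,u₄), and let L₁ and L₂ be respectively the largest and the second largest of S₁, S₂, S₃. Then L₁ − L₂ ≤ 2·min_{i ≠ j} d(u_i, u_j). -/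
private lemma auxA (a b c D : ℝ) (h1 : a - b ≤ D) (h2 : a - c ≤ D)
    (h3 : b - c ≤ D) (h4 : c - b ≤ D) :
    max a (max b c) - max (min a b) (max (min a c) (min b c)) ≤ D := by
  rcases le_total a b with hab | hab <;> rcases le_total a c with hac | hac <;>
    rcases le_total b c with hbc | hbc <;>
    simp only [max_def, min_def] <;> split_ifs <;> linarith

private lemma auxB (a b c D : ℝ) (h1 : b - a ≤ D) (h2 : b - c ≤ D)
    (h3 : a - c ≤ D) (h4 : c - a ≤ D) :
    max a (max b c) - max (min a b) (max (min a c) (min b c)) ≤ D := by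
  rcases le_total a b with hab | hab <;> rcases le_total a c with hac | hac <;>
    rcases le_total b c with hbc | hbc <;>
    simp only [max_def, min_def] <;> split_ifs <;> linarith

private lemma auxC (a b c D : ℝ) (h1 : c - a ≤ D) (h2 : c - b ≤ D)
    (h3 : a - b ≤ D) (h4 : b - a ≤ D) :
    max a (max b c) - max (min a b) (max (min a c) (min b c)) ≤ D := by
  rcases le_total a b with hab | hab <;> rcases le_total a c with hac | hac <;>
    rcases le_total b c with hbc | hbc <;>
    simp only [max_def, min_def] <;> split_ifs <;> linarith

/-- With `S₁ = d(u₁,u₃)+d(u₂,u₄)`, `S₂ = d(u₁,u₄)+d(u₂,u₃)`, `S₃ = d(u₁,u₂)+d(u₃,u₄)`,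
and `L₁`, `L₂` the largest and second largest of the three, one has
`L₁ - L₂ ≤ 2·min_{i ≠ j} d(u_i, u_j)`. -/
theorem stmt11 {V : Type*} [Fintype V] (G : SimpleGraph V) (hconn : G.Connected)
    (u : Fin 4 → V)
    (S₁ S₂ S₃ L₁ L₂ : ℝ)
    (hS₁ : S₁ = (G.dist (u 0) (u 2) : ℝ) + (G.dist (u 1) (u 3) : ℝ))
    (hS₂ : S₂ = (G.dist (u 0) (u 3) : ℝ) + (G.dist (u 1) (u 2) : ℝ))
    (hS₃ : S₃ = (G.dist (u 0) (u 1) : ℝ) + (G.dist (u 2) (u 3) : ℝ))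
    (hL₁ : L₁ = max S₁ (max S₂ S₃))
    (hL₂ : L₂ = max (min S₁ S₂) (max (min S₁ S₃) (min S₂ S₃))) :
    ∀ i j : Fin 4, i ≠ j → L₁ - L₂ ≤ 2 * (G.dist (u i) (u j) : ℝ) := by
  have tri : ∀ x y z : V, (G.dist x z : ℝ) ≤ (G.dist x y : ℝ) + (G.dist y z : ℝ) := by
    intro x y z
    exact_mod_cast hconn.dist_triangle
  have sym : ∀ x y : V, (G.dist x y : ℝ) = (G.dist y x : ℝ) := by
    intro x y; rw [SimpleGraph.dist_comm]
  have b01 : max S₁ (max S₂ S₃) - max (min S₁ S₂) (max (min S₁ S₃) (min S₂ S₃)) ≤ 2 * (G.dist (u 0) (u 1) : ℝ) := by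
    refine auxC S₁ S₂ S₃ _ ?_ ?_ ?_ ?_ <;> linarith [tri (u 0) (u 1) (u 2), tri (u 0) (u 1) (u 3), tri (u 0) (u 2) (u 1), tri (u 0) (u 2) (u 3), tri (u 0) (u 3) (u 1), tri (u 0) (u 3) (u 2), tri (u 1) (u 0) (u 2), tri (u 1) (u 0) (u 3), tri (u 1) (u 2) (u 0), tri (u 1) (u 2) (u 3), tri (u 1) (u 3) (u 0), tri (u 1) (u 3) (u 2), tri (u 2) (u 0) (u 1), tri (u 2) (u 0) (u 3), tri (u 2) (u 1) (u 0), tri (u 2) (u 1) (u 3), tri (u 2) (u 3) (u 0), tri (u 2) (u 3) (u 1), tri (u 3) (u 0) (u 1), tri (u 3) (u 0) (u 2), tri (u 3) (u 1) (u 0), tri (u 3) (u 1) (u 2), tri (u 3) (u 2) (u 0), tri (u 3) (u 2) (u 1), sym (u 0) (u 1), sym (u 0) (u 2), sym (u 0) (u 3), sym (u 1) (u 2), sym (u 1) (u 3), sym (u 2) (u 3), hS₁, hS₂, hS₃]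
  have b10 : max S₁ (max S₂ S₃) - max (min S₁ S₂) (max (min S₁ S₃) (min S₂ S₃)) ≤ 2 * (G.dist (u 1) (u 0) : ℝ) := by
    rw [← sym (u 0) (u 1)]; exact b01
  have b23 : max S₁ (max S₂ S₃) - max (min S₁ S₂) (max (min S₁ S₃) (min S₂ S₃)) ≤ 2 * (G.dist (u 2) (u 3) : ℝ) := by
    refine auxC S₁ S₂ S₃ _ ?_ ?_ ?_ ?_ <;> linarith [tri (u 0) (u 1) (u 2), tri (u 0) (u 1) (u 3), tri (u 0) (u 2) (u 1), tri (u 0) (u 2) (u 3), tri (u 0) (u 3) (u 1), tri (u 0) (u 3) (u 2), tri (u 1) (u 0) (u 2), tri (u 1) (u 0) (u 3), tri (u 1) (u 2) (u 0), tri (u 1) (u 2) (u 3), tri (u 1) (u 3) (u 0), tri (u 1) (u 3) (u 2), tri (u 2) (u 0) (u 1), tri (u 2) (u 0) (u 3), tri (u 2) (u 1) (u 0), tri (u 2) (u 1) (u 3), tri (u 2) (u 3) (u 0), tri (u 2) (u 3) (u 1), tri (u 3) (u 0) (u 1), tri (u 3) (u 0) (u 2), tri (u 3) (u 1) (u 0),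 tri (u 3) (u 1) (u 2), tri (u 3) (u 2) (u 0), tri (u 3) (u 2) (u 1), sym (u 0) (u 1), sym (u 0) (u 2), sym (u 0) (u 3), sym (u 1) (u 2), sym (u 1) (u 3), sym (u 2) (u 3), hS₁, hS₂, hS₃]
  have b32 : max S₁ (max S₂ S₃) - max (min S₁ S₂) (max (min S₁ S₃) (min S₂ S₃)) ≤ 2 * (G.dist (u 3) (u 2) : ℝ) := by
    rw [← sym (u 2) (u 3)]; exact b23
  have b02 : max S₁ (max S₂ S₃) - max (min S₁ S₂) (max (min S₁ S₃) (min S₂ S₃)) ≤ 2 * (G.dist (u 0) (u 2) : ℝ) := by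
    refine auxA S₁ S₂ S₃ _ ?_ ?_ ?_ ?_ <;> linarith [tri (u 0) (u 1) (u 2), tri (u 0) (u 1) (u 3), tri (u 0) (u 2) (u 1), tri (u 0) (u 2) (u 3), tri (u 0) (u 3) (u 1), tri (u 0) (u 3) (u 2), tri (u 1) (u 0) (u 2), tri (u 1) (u 0) (u 3), tri (u 1) (u 2) (u 0), tri (u 1) (u 2) (u 3), tri (u 1) (u 3) (u 0), tri (u 1) (u 3) (u 2), tri (u 2) (u 0) (u 1), tri (u 2) (u 0) (u 3), tri (u 2) (u 1) (u 0), tri (u 2) (u 1) (u 3), tri (u 2) (u 3) (u 0), tri (u 2) (u 3) (u 1), tri (u 3) (u 0) (u 1), tri (u 3) (u 0) (u 2), tri (u 3) (u 1) (u 0), tri (u 3) (u 1) (u 2), tri (u 3) (u 2) (u 0), tri (u 3) (u 2) (u 1), sym (u 0) (u 1), sym (u 0) (u 2), sym (u 0) (u 3), sym (u 1) (u 2), sym (u 1) (u 3), sym (u 2) (u 3), hS₁, hS₂, hS₃]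
  have b20 : max S₁ (max S₂ S₃) - max (min S₁ S₂) (max (min S₁ S₃) (min S₂ S₃)) ≤ 2 * (G.dist (u 2) (u 0) : ℝ) := by
    rw [← sym (u 0) (u 2)]; exact b02
  have b13 : max S₁ (max S₂ S₃) - max (min S₁ S₂) (max (min S₁ S₃) (min S₂ S₃)) ≤ 2 * (G.dist (u 1) (u 3) : ℝ) := by
    refine auxA S₁ S₂ S₃ _ ?_ ?_ ?_ ?_ <;> linarith [tri (u 0) (u 1) (u 2), tri (u 0) (u 1) (u 3), tri (u 0) (u 2) (u 1), tri (u 0) (u 2) (u 3), tri (u 0) (u 3) (u 1), tri (u 0) (u 3) (u 2), tri (u 1) (u 0) (u 2), tri (u 1) (u 0) (u 3), tri (u 1) (u 2) (u 0), tri (u 1) (u 2) (u 3), tri (u 1) (u 3) (u 0), tri (u 1) (u 3) (u 2), tri (u 2) (u 0) (u 1), tri (u 2) (u 0) (u 3), tri (u 2) (u 1) (u 0), tri (u 2) (u 1) (u 3), tri (u 2) (u 3) (u 0), tri (u 2) (u 3) (u 1), tri (u 3) (u 0) (u 1), tri (u 3) (u 0) (u 2), tri (u 3) (u 1) (u 0),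 tri (u 3) (u 1) (u 2), tri (u 3) (u 2) (u 0), tri (u 3) (u 2) (u 1), sym (u 0) (u 1), sym (u 0) (u 2), sym (u 0) (u 3), sym (u 1) (u 2), sym (u 1) (u 3), sym (u 2) (u 3), hS₁, hS₂, hS₃]
  have b31 : max S₁ (max S₂ S₃) - max (min S₁ S₂) (max (min S₁ S₃) (min S₂ S₃)) ≤ 2 * (G.dist (u 3) (u 1) : ℝ) := by
    rw [← sym (u 1) (u 3)]; exact b13
  have b03 : max S₁ (max S₂ S₃) - max (min S₁ S₂) (max (min S₁ S₃) (min S₂ S₃)) ≤ 2 * (G.dist (u 0) (u 3) : ℝ) := by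
    refine auxB S₁ S₂ S₃ _ ?_ ?_ ?_ ?_ <;> linarith [tri (u 0) (u 1) (u 2), tri (u 0) (u 1) (u 3), tri (u 0) (u 2) (u 1), tri (u 0) (u 2) (u 3), tri (u 0) (u 3) (u 1), tri (u 0) (u 3) (u 2), tri (u 1) (u 0) (u 2), tri (u 1) (u 0) (u 3), tri (u 1) (u 2) (u 0), tri (u 1) (u 2) (u 3), tri (u 1) (u 3) (u 0), tri (u 1) (u 3) (u 2), tri (u 2) (u 0) (u 1), tri (u 2) (u 0) (u 3), tri (u 2) (u 1) (u 0), tri (u 2) (u 1) (u 3), tri (u 2) (u 3) (u 0), tri (u 2) (u 3) (u 1), tri (u 3) (u 0) (u 1), tri (u 3) (u 0) (u 2), tri (u 3) (u 1) (u 0), tri (u 3) (u 1) (u 2), tri (u 3) (u 2) (u 0), tri (u 3) (u 2) (u 1), sym (u 0) (u 1), sym (u 0) (u 2), sym (u 0) (u 3), sym (u 1) (u 2), sym (u 1) (u 3), sym (u 2) (u 3), hS₁, hS₂, hS₃]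
  have b30 : max S₁ (max S₂ S₃) - max (min S₁ S₂) (max (min S₁ S₃) (min S₂ S₃)) ≤ 2 * (G.dist (u 3) (u 0) : ℝ) := by
    rw [← sym (u 0) (u 3)]; exact b03
  have b12 : max S₁ (max S₂ S₃) - max (min S₁ S₂) (max (min S₁ S₃) (min S₂ S₃)) ≤ 2 * (G.dist (u 1) (u 2) : ℝ) := by
    refine auxB S₁ S₂ S₃ _ ?_ ?_ ?_ ?_ <;> linarith [tri (u 0) (u 1) (u 2), tri (u 0) (u 1) (u 3), tri (u 0) (u 2) (u 1), tri (u 0) (u 2) (u 3), tri (u 0) (u 3) (u 1), tri (u 0) (u 3) (u 2), tri (u 1) (u 0) (u 2), tri (u 1) (u 0) (u 3), tri (u 1) (u 2) (u 0), tri (u 1) (u 2) (u 3), tri (u 1) (u 3) (u 0), tri (u 1) (u 3) (u 2), tri (u 2) (u 0) (u 1), tri (u 2) (u 0) (u 3), tri (u 2) (u 1) (u 0), tri (u 2) (u 1) (u 3), tri (u 2) (u 3) (u 0), tri (u 2) (u 3) (u 1), tri (u 3) (u 0) (u 1), tri (u 3) (u 0) (u 2), tri (u 3) (u 1) (u 0),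 tri (u 3) (u 1) (u 2), tri (u 3) (u 2) (u 0), tri (u 3) (u 2) (u 1), sym (u 0) (u 1), sym (u 0) (u 2), sym (u 0) (u 3), sym (u 1) (u 2), sym (u 1) (u 3), sym (u 2) (u 3), hS₁, hS₂, hS₃]
  have b21 : max S₁ (max S₂ S₃) - max (min S₁ S₂) (max (min S₁ S₃) (min S₂ S₃)) ≤ 2 * (G.dist (u 2) (u 1) : ℝ) := by
    rw [← sym (u 1) (u 2)]; exact b12
  subst hL₁ hL₂
  intro i j hij
  fin_cases i <;> fin_cases j <;>
    first | exact absurd rfl hij | exact b01 | exact b02 | exact b03 | exact b10 | exact b12 | exact b13 | exact b20 | exact b21 | exact b23 | exact b30 | exact b31 | exact b32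
end

section
/- Let G be a connected finite simple graph with δ̂-thin triangles. Let u, x, v, y be vertices with d(u,x) < d(u,v)/2 and d(v,y) < d(u,v)/2, suppose d(u,v) is even, let p be a shortest walk from u to v and let r be the vertex on p with d(u,r) = d(u,v)/2. Then every shortest walk from x to y contains a vertex w with d(r,w) ≤ 2δ̂. -/
/-- If `d(u,x) < d(u,v)/2` and `d(v,y) < d(u,v)/2` and `r` is the midpoint of a shortest
walk from `u` to `v`, then every shortest walk from `x` to `y` passes within `2δ̂` of `r`. -/
theorem stmt12 {V : Type*} [Fintype V] (G : SimpleGraph V) (hconn : G.Connected)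
    (δ : ℝ) (hδ : 0 ≤ δ) (hthin : ThinTriangles G δ)
    (u x v y : V)
    (hux : 2 * G.dist u x < G.dist u v) (hvy : 2 * G.dist v y < G.dist u v)
    (heven : Even (G.dist u v))
    (p : G.Walk u v) (hp : p.length = G.dist u v) :
    ∀ q : G.Walk x y, q.length = G.dist x y →
      ∃ w ∈ q.support, (G.dist (p.getVert (G.dist u v / 2)) w : ℝ) ≤ 2 * δ := by
  intro q hq
  set m : ℕ := G.dist u v / 2 with hm
  have h2m : 2 * m = G.dist u v := Nat.two_mul_div_two_of_even heven
  obtain ⟨g, hg⟩ := hconn.exists_walk_length_eq_dist u y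
  have t1 : G.dist u v ≤ G.dist u y + G.dist y v := hconn.dist_triangle
  have t2 : G.dist u y ≤ G.dist u x + G.dist x y := hconn.dist_triangle
  have cyv : G.dist y v = G.dist v y := SimpleGraph.dist_comm ..
  have cvu : G.dist v u = G.dist u v := SimpleGraph.dist_comm ..
  have cyu : G.dist y u = G.dist u y := SimpleGraph.dist_comm ..
  have cxy : G.dist x y = G.dist y x := SimpleGraph.dist_comm ..
  have cux : G.dist u x = G.dist x u := SimpleGraph.dist_comm ..
  rw [cyv] at t1
  have r1 : (G.dist u v : ℝ) ≤ G.dist u y + G.dist v y := by exact_mod_cast t1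
  have r2 : 2 * (G.dist v y : ℝ) < G.dist u v := by exact_mod_cast hvy
  have r3 : 2 * (m : ℝ) = G.dist u v := by exact_mod_cast h2m
  have r4 : (G.dist u y : ℝ) ≤ G.dist u x + G.dist x y := by exact_mod_cast t2
  have r5 : 2 * (G.dist u x : ℝ) < G.dist u v := by exact_mod_cast hux
  have hmle : m ≤ G.dist u y := by omega
  -- first thinness application: triangle (u; v, y)
  have h1 : (G.dist (p.getVert m) (g.getVert m) : ℝ) ≤ δ := by
    apply hthin u v y p g hp hg m
    unfold gp
    rw [cvu, cyu]
    linarith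
  -- second thinness application: triangle (y; u, x)
  set k : ℕ := G.dist u y - m with hk
  have hgr : g.reverse.length = G.dist y u := by rw [SimpleGraph.Walk.length_reverse, hg, cyu]
  have hqr : q.reverse.length = G.dist y x := by rw [SimpleGraph.Walk.length_reverse, hq, cxy]
  have hkk : (k : ℝ) = (G.dist u y : ℝ) - m := by
    rw [hk]; push_cast [Nat.cast_sub hmle]; ring
  have h2 : (G.dist (g.reverse.getVert k) (q.reverse.getVert k) : ℝ) ≤ δ := by
    apply hthin y u x g.reverse q.reverse hgr hqr k
    unfold gp
    rw [hkk]
    linarith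
  have hgrk : g.reverse.getVert k = g.getVert m := by
    rw [SimpleGraph.Walk.getVert_reverse, hg, hk]
    congr 1
    omega
  rw [hgrk] at h2
  refine ⟨q.reverse.getVert k, ?_, ?_⟩
  · rw [SimpleGraph.Walk.mem_support_iff_exists_getVert]
    refine ⟨q.length - k, ?_, Nat.sub_le _ _⟩
    rw [SimpleGraph.Walk.getVert_reverse]
  · have t3 := hconn.dist_triangle
      (u := p.getVert m) (v := g.getVert m) (w := q.reverse.getVert k)
    have t3' : (G.dist (p.getVert m) (q.reverse.getVert k) : ℝ) ≤
        G.dist (p.getVert m) (g.getVert m) + G.dist (g.getVert m) (q.reverse.getVert k) := by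
      exact_mod_cast t3
    linarith
end

section
/- Let G be a connected finite simple graph with δ̂-thin triangles whose distance satisfies the four-point condition with constant δ. Let u, v be vertices with d(u,v) = diam(G) and let x, y be vertices with d(x,y) ≥ diam(G) − t, and suppose d(u,v) and d(x,y) are both even. Let r be the vertex at distance d(u,v)/2 from u on a shortest walk from u to v, and let r' be the vertex at distance d(x,y)/2 from x on a shortest walk from x to y. Then d(r,r') ≤ t/2 + 4δ̂ + 2δ. -/
lemma aux_length_drop {V : Type*} {G : SimpleGraph V} {u v : V} (p : G.Walk u v) (n : ℕ) :
    (p.drop n).length = p.length - n := by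
  induction p generalizing n with
  | nil => simp [SimpleGraph.Walk.drop]
  | cons h q ih =>
    cases n with
    | zero => simp [SimpleGraph.Walk.drop]
    | succ n => simpa [SimpleGraph.Walk.drop] using ih n

lemma aux_dist_drop {V : Type*} {G : SimpleGraph V} {u v : V} (p : G.Walk u v) (k : ℕ) :
    G.dist (p.getVert k) v ≤ p.length - k := by
  simpa [aux_length_drop] using SimpleGraph.dist_le (p.drop k)

lemma aux_dist_take {V : Type*} {G : SimpleGraph V} {u v : V} (p : G.Walk u v) {k : ℕ}
    (hk : k ≤ p.length) : G.dist u (p.getVert k) ≤ k := by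
  have h := aux_dist_drop p.reverse (p.length - k)
  rw [SimpleGraph.Walk.getVert_reverse, SimpleGraph.Walk.length_reverse,
      Nat.sub_sub_self hk] at h
  rw [SimpleGraph.dist_comm]
  exact h

lemma aux_dist_getVert {V : Type*} {G : SimpleGraph V} {u v : V} (hconn : G.Connected)
    (p : G.Walk u v) (hp : p.length = G.dist u v) {k : ℕ} (hk : k ≤ p.length) :
    G.dist u (p.getVert k) = k ∧ G.dist (p.getVert k) v = p.length - k := by
  have h1 := aux_dist_take p hk
  have h2 := aux_dist_drop p k
  have h3 : G.dist u v ≤ G.dist u (p.getVert k) + G.dist (p.getVert k) v :=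
    hconn.dist_triangle
  omega

/-- If `d(u,v) = diam G`, `d(x,y) ≥ diam G - t`, `r` is the midpoint of a shortest walk
from `u` to `v` and `r'` the midpoint of a shortest walk from `x` to `y`, then
`d(r,r') ≤ t/2 + 4δ̂ + 2δ`. -/
theorem stmt14 {V : Type*} [Fintype V] (G : SimpleGraph V) (hconn : G.Connected)
    (δ' δ t : ℝ) (hδ' : 0 ≤ δ') (hδ : 0 ≤ δ)
    (hthin : ThinTriangles G δ')
    (hfour : ∀ a b c d : V, (G.dist a b : ℝ) + (G.dist c d : ℝ) ≤
      max ((G.dist a c : ℝ) + (G.dist b d : ℝ)) ((G.dist a d : ℝ) + (G.dist b c : ℝ))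
        + 2 * δ)
    (u v x y : V) (huv : G.dist u v = G.diam)
    (hxy : (G.dist x y : ℝ) ≥ (G.diam : ℝ) - t)
    (heuv : Even (G.dist u v)) (hexy : Even (G.dist x y))
    (p : G.Walk u v) (hp : p.length = G.dist u v)
    (q : G.Walk x y) (hq : q.length = G.dist x y) :
    (G.dist (p.getVert (G.dist u v / 2)) (q.getVert (G.dist x y / 2)) : ℝ) ≤
      t / 2 + 4 * δ' + 2 * δ := by
  classical
  obtain ⟨c, hc⟩ := heuv
  obtain ⟨c', hc'⟩ := hexy
  set D := G.dist u v with hD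
  set L := G.dist x y with hL
  set m := D / 2 with hmdef
  set n := L / 2 with hndef
  have hm2 : m + m = D := by omega
  have hn2 : n + n = L := by omega
  -- distances ≤ D
  have hne : G.ediam ≠ ⊤ := by
    have : Nonempty V := ⟨u⟩
    obtain ⟨a0, b0, hab⟩ := G.exists_edist_eq_ediam_of_finite
    rw [← hab]
    exact SimpleGraph.edist_ne_top_iff_reachable.mpr (hconn a0 b0)
  have hle : ∀ a b : V, G.dist a b ≤ D := by
    intro a b
    calc G.dist a b ≤ G.diam := SimpleGraph.dist_le_diam hne
    _ = D := huv.symm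
  -- midpoints
  obtain ⟨hur, hrv⟩ := aux_dist_getVert hconn p hp (show m ≤ p.length by omega)
  obtain ⟨hxr', hr'yraw⟩ := aux_dist_getVert hconn q hq (show n ≤ q.length by omega)
  set r := p.getVert m with hr
  set r' := q.getVert n with hr'
  have hr'y : G.dist r' y = n := by rw [hr'yraw, hq]; omega
  have hr'x : G.dist r' x = n := by rw [SimpleGraph.dist_comm]; exact hxr'
  -- cast facts
  have hDr : (D : ℝ) = (m : ℝ) + (m : ℝ) := by exact_mod_cast hm2.symm
  have hLr : (L : ℝ) = (n : ℝ) + (n : ℝ) := by exact_mod_cast hn2.symm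
  have hxyD : (L : ℝ) ≥ (D : ℝ) - t := by rwa [← huv] at hxy
  -- bounds on d(u,r') and d(v,r')
  have ha : (G.dist u r' : ℝ) ≤ (D : ℝ) - (n : ℝ) + 2 * δ := by
    have h4 := hfour u r' x y
    rw [hr'y, hr'x] at h4
    have d1 : (G.dist u x : ℝ) ≤ (D : ℝ) := by exact_mod_cast hle u x
    have d2 : (G.dist u y : ℝ) ≤ (D : ℝ) := by exact_mod_cast hle u y
    have hmax : max ((G.dist u x : ℝ) + (n : ℝ)) ((G.dist u y : ℝ) + (n : ℝ))
        ≤ (D : ℝ) + (n : ℝ) := max_le (by linarith) (by linarith)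
    rw [← hL] at h4
    linarith
  have hb : (G.dist v r' : ℝ) ≤ (D : ℝ) - (n : ℝ) + 2 * δ := by
    have h4 := hfour v r' x y
    rw [hr'y, hr'x] at h4
    have d1 : (G.dist v x : ℝ) ≤ (D : ℝ) := by exact_mod_cast hle v x
    have d2 : (G.dist v y : ℝ) ≤ (D : ℝ) := by exact_mod_cast hle v y
    have hmax : max ((G.dist v x : ℝ) + (n : ℝ)) ((G.dist v y : ℝ) + (n : ℝ))
        ≤ (D : ℝ) + (n : ℝ) := max_le (by linarith) (by linarith)
    rw [← hL] at h4
    linarith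
  have hab : (D : ℝ) ≤ (G.dist u r' : ℝ) + (G.dist v r' : ℝ) := by
    have h := hconn.dist_triangle (u := u) (v := r') (w := v)
    have hc2 : G.dist r' v = G.dist v r' := SimpleGraph.dist_comm
    rw [hc2] at h
    exact_mod_cast h
  by_cases hP : (m : ℝ) ≤ ((D : ℝ) + (G.dist u r' : ℝ) - (G.dist v r' : ℝ)) / 2
  · -- base u
    obtain ⟨w, hw⟩ := hconn.exists_walk_length_eq_dist u r'
    have hgp : (m : ℝ) ≤ gp G u v r' := by
      have e1 : G.dist v u = D := SimpleGraph.dist_comm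
      have e2 : G.dist r' u = G.dist u r' := SimpleGraph.dist_comm
      simp only [gp, e1, e2]
      linarith
    have hthin1 := hthin u v r' p w hp hw m hgp
    have hma : m ≤ G.dist u r' := by
      have : (m : ℝ) ≤ (G.dist u r' : ℝ) := by linarith
      exact_mod_cast this
    have hw2 := (aux_dist_getVert hconn w hw (show m ≤ w.length by omega)).2
    have hcast : (G.dist (w.getVert m) r' : ℝ) = (G.dist u r' : ℝ) - (m : ℝ) := by
      rw [hw2, hw]
      exact Nat.cast_sub hma
    have htri : (G.dist r r' : ℝ) ≤
        (G.dist r (w.getVert m) : ℝ) + (G.dist (w.getVert m) r' : ℝ) := by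
      exact_mod_cast hconn.dist_triangle (u := r) (v := w.getVert m) (w := r')
    linarith
  · -- base v
    have hQ : (m : ℝ) ≤ ((D : ℝ) + (G.dist v r' : ℝ) - (G.dist u r' : ℝ)) / 2 := by
      push_neg at hP
      linarith
    obtain ⟨w, hw⟩ := hconn.exists_walk_length_eq_dist v r'
    have hprev : p.reverse.length = G.dist v u := by
      rw [SimpleGraph.Walk.length_reverse, hp, SimpleGraph.dist_comm]
    have hgp : (m : ℝ) ≤ gp G v u r' := by
      have e1 : G.dist u v = D := rfl
      have e2 : G.dist r' v = G.dist v r' := SimpleGraph.dist_comm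
      simp only [gp, e1, e2]
      linarith
    have hthin1 := hthin v u r' p.reverse w hprev hw m hgp
    have hrev : p.reverse.getVert m = r := by
      rw [SimpleGraph.Walk.getVert_reverse]
      have : p.length - m = m := by omega
      rw [this]
    rw [hrev] at hthin1
    have hma : m ≤ G.dist v r' := by
      have : (m : ℝ) ≤ (G.dist v r' : ℝ) := by linarith
      exact_mod_cast this
    have hw2 := (aux_dist_getVert hconn w hw (show m ≤ w.length by omega)).2
    have hcast : (G.dist (w.getVert m) r' : ℝ) = (G.dist v r' : ℝ) - (m : ℝ) := by
      rw [hw2, hw]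
      exact Nat.cast_sub hma
    have htri : (G.dist r r' : ℝ) ≤
        (G.dist r (w.getVert m) : ℝ) + (G.dist (w.getVert m) r' : ℝ) := by
      exact_mod_cast hconn.dist_triangle (u := r) (v := w.getVert m) (w := r')
    linarith
end
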